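/- arXiv:2002.08459 — 11 statements merged into one kernel-verified Lean document; each statement's English description precedes it below -/
import Mathlib

section
/- Let α, β ∈ (0,1) with α + β < 1. There exists a constant C depending only on α and β such that for all continuous 2π-periodic functions f, g : ℝ → ℝ, if f is α-Hölder with constant C_f and g is β-Hölder with constant C_g, then their circle convolution h satisfies |h(t) − h(s)| ≤ C · C_f · C_g · |t − s|^(α+β) for all t, s ∈ ℝ. -/
/-!
The circle convolution `h = f ∗ g` satisfies the Zygmund-type bound
`|h (t + δ) - 2 h t + h (t - δ)| ≤ 2π C_f C_g δ^(α+β)`, because its second difference is the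
integral of `(f (t + δ - y) - f (t - y)) * (g y - g (y - δ))`, a product of an `α`-Hölder and a
`β`-Hölder increment. For a bounded function and an exponent `γ < 1`, such a second-difference
bound already gives `γ`-Hölder continuity: halving
`h (s + δ) - h s = ((h (s + 2δ) - h s) - Δ²h) / 2` along the dyadic scales `2ⁿ δ` gives a
geometric series with ratio `2^γ / 2 < 1`, while the boundary term `2⁻ⁿ (h (s + 2ⁿ δ) - h s)`
vanishes since `h` is bounded.
-/

open Real intervalIntegral Filter Topology

section Zygmund

variable {H : ℝ → ℝ} {M K γ : ℝ}

theorem two_sub_two_rpow_pos (hγ : γ < 1) : 0 < 2 - (2 : ℝ) ^ γ := by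
  have := rpow_lt_rpow_of_exponent_lt one_lt_two hγ
  rw [rpow_one] at this
  linarith

/-- `K / (2 - 2^γ)` is the fixed point of `A ↦ (2^γ A + K) / 2`, which lets the induction pass
from scale `2 δ` to scale `δ`. -/
theorem abs_sub_le_add_of_abs_second_diff_le (hγ : γ < 1) (hM : ∀ x, |H x| ≤ M)
    (hK : ∀ t δ, 0 < δ → |H (t + δ) - 2 * H t + H (t - δ)| ≤ K * δ ^ γ) (s : ℝ) (n : ℕ) :
    ∀ δ, 0 < δ → |H (s + δ) - H s| ≤ K / (2 - 2 ^ γ) * δ ^ γ + 2 * M * (1 / 2) ^ n := by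
  have hd := two_sub_two_rpow_pos hγ
  have hK0 : 0 ≤ K := by simpa using (abs_nonneg _).trans (hK 0 1 one_pos)
  induction n with
  | zero =>
    intro δ hδ
    have hbase : |H (s + δ) - H s| ≤ 2 * M :=
      (abs_sub _ _).trans (by linarith [hM (s + δ), hM s])
    have hA : 0 ≤ K / (2 - 2 ^ γ) * δ ^ γ := by positivity
    simp only [pow_zero, mul_one]
    linarith
  | succ n ih =>
    intro δ hδ
    have hsecond := hK (s + δ) δ hδ
    rw [show s + δ + δ = s + 2 * δ by ring, add_sub_cancel_right] at hsecond
    have hhalf : |H (s + δ) - H s|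
        ≤ (|H (s + 2 * δ) - H s| + |H (s + 2 * δ) - 2 * H (s + δ) + H s|) / 2 := by
      rw [show H (s + δ) - H s
          = ((H (s + 2 * δ) - H s) - (H (s + 2 * δ) - 2 * H (s + δ) + H s)) / 2 by ring,
        abs_div, abs_two]
      gcongr
      exact abs_sub _ _
    have hcoarse := ih (2 * δ) (by positivity)
    rw [mul_rpow zero_le_two hδ.le] at hcoarse
    have hfix : K / (2 - 2 ^ γ) * 2 ^ γ / 2 + K / 2 = K / (2 - 2 ^ γ) := by
      field_simp
      ring
    calc |H (s + δ) - H s|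
        ≤ (K / (2 - 2 ^ γ) * (2 ^ γ * δ ^ γ) + 2 * M * (1 / 2) ^ n + K * δ ^ γ) / 2 := by
          linarith
      _ = (K / (2 - 2 ^ γ) * 2 ^ γ / 2 + K / 2) * δ ^ γ + 2 * M * (1 / 2) ^ (n + 1) := by ring
      _ = K / (2 - 2 ^ γ) * δ ^ γ + 2 * M * (1 / 2) ^ (n + 1) := by rw [hfix]

theorem abs_sub_le_of_abs_second_diff_le (hγ : γ < 1) (hM : ∀ x, |H x| ≤ M)
    (hK : ∀ t δ, 0 < δ → |H (t + δ) - 2 * H t + H (t - δ)| ≤ K * δ ^ γ) (t s : ℝ) :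
    |H t - H s| ≤ K / (2 - 2 ^ γ) * |t - s| ^ γ := by
  wlog hst : s ≤ t generalizing t s
  · rw [abs_sub_comm, abs_sub_comm t]
    exact this s t (le_of_not_ge hst)
  rcases hst.eq_or_lt with rfl | hst
  · have hd := two_sub_two_rpow_pos hγ
    have hK0 : 0 ≤ K := by simpa using (abs_nonneg _).trans (hK 0 1 one_pos)
    simp only [sub_self, abs_zero]
    positivity
  · have hbounds := fun n ↦ abs_sub_le_add_of_abs_second_diff_le hγ hM hK s n (t - s) (by linarith)
    rw [add_sub_cancel] at hbounds
    rw [abs_of_pos (sub_pos.2 hst)]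
    refine ge_of_tendsto' (x := atTop) ?_ hbounds
    simpa using ((tendsto_pow_atTop_nhds_zero_of_lt_one (by norm_num) (by norm_num :
      (1 / 2 : ℝ) < 1)).const_mul (2 * M)).const_add (K / (2 - 2 ^ γ) * (t - s) ^ γ)

end Zygmund

namespace Function.Periodic

variable {F : ℝ → ℝ} {T : ℝ}

theorem intervalIntegral_comp_add_right (hF : Periodic F T) (a : ℝ) :
    ∫ x in (0 : ℝ)..T, F (x + a) = ∫ x in (0 : ℝ)..T, F x := by
  rw [integral_comp_add_right, zero_add, add_comm T, hF.intervalIntegral_add_eq a 0, zero_add]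

theorem intervalIntegral_comp_sub_left (hF : Periodic F T) (c : ℝ) :
    ∫ x in (0 : ℝ)..T, F (c - x) = ∫ x in (0 : ℝ)..T, F x := by
  rw [integral_comp_sub_left, sub_zero]
  simpa using hF.intervalIntegral_add_eq (c - T) 0

end Function.Periodic

noncomputable def circleConv (T : ℝ) (f g : ℝ → ℝ) (t : ℝ) : ℝ :=
  ∫ x in (0 : ℝ)..T, f x * g (t - x)

namespace circleConv

variable {T : ℝ} {f g : ℝ → ℝ}

theorem periodic (hg : Function.Periodic g T) : Function.Periodic (circleConv T f g) T := by
  intro t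
  simp only [circleConv, add_sub_right_comm t T, hg _]

theorem continuous (hf : Continuous f) (hg : Continuous g) : Continuous (circleConv T f g) :=
  continuous_parametric_intervalIntegral_of_continuous' (by fun_prop) 0 T

theorem exists_abs_le (hf : Continuous f) (hg : Continuous g) (hgp : Function.Periodic g T)
    (hT : T ≠ 0) : ∃ M, ∀ t, |circleConv T f g t| ≤ M := by
  obtain ⟨M, hM⟩ := isBounded_iff_forall_norm_le.1
    ((periodic hgp).isBounded_of_continuous hT (continuous hf hg))
  exact ⟨M, fun t ↦ hM _ ⟨t, rfl⟩⟩

theorem eq_integral_comp_sub_mul (hf : Function.Periodic f T) (hg : Function.Periodic g T)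
    (t : ℝ) : circleConv T f g t = ∫ y in (0 : ℝ)..T, f (t - y) * g y := by
  have hF : Function.Periodic (fun x ↦ f x * g (t - x)) T := fun x ↦ by
    simp only [hf x, ← sub_sub, hg.sub_eq]
  rw [circleConv, ← hF.intervalIntegral_comp_sub_left t]
  simp only [sub_sub_cancel]

theorem sub_eq_integral (hf : Continuous f) (hg : Continuous g) (hfp : Function.Periodic f T)
    (hgp : Function.Periodic g T) (t s : ℝ) :
    circleConv T f g t - circleConv T f g s = ∫ y in (0 : ℝ)..T, (f (t - y) - f (s - y)) * g y := by
  rw [eq_integral_comp_sub_mul hfp hgp, eq_integral_comp_sub_mul hfp hgp,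
    ← integral_sub ((by fun_prop : Continuous _).intervalIntegrable _ _)
      ((by fun_prop : Continuous _).intervalIntegrable _ _)]
  simp only [sub_mul]

theorem second_diff_eq (hf : Continuous f) (hg : Continuous g) (hfp : Function.Periodic f T)
    (hgp : Function.Periodic g T) (t δ : ℝ) :
    circleConv T f g (t + δ) - 2 * circleConv T f g t + circleConv T f g (t - δ)
      = ∫ y in (0 : ℝ)..T, (f (t + δ - y) - f (t - y)) * (g y - g (y - δ)) := by
  have hF : Function.Periodic (fun y ↦ (f (t + δ - y) - f (t - y)) * g (y - δ)) T := fun y ↦ by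
    simp only [← sub_sub, hfp.sub_eq, add_sub_right_comm y T δ, hgp _]
  have hshift : ∫ y in (0 : ℝ)..T, (f (t - y) - f (t - δ - y)) * g y
      = ∫ y in (0 : ℝ)..T, (f (t + δ - y) - f (t - y)) * g (y - δ) := by
    rw [← hF.intervalIntegral_comp_add_right δ]
    congr 1 with y
    rw [add_sub_add_right_eq_sub, add_sub_cancel_right, sub_add_eq_sub_sub_swap]
  calc _ = (circleConv T f g (t + δ) - circleConv T f g t)
        - (circleConv T f g t - circleConv T f g (t - δ)) := by ring
    _ = _ := by
      rw [sub_eq_integral hf hg hfp hgp, sub_eq_integral hf hg hfp hgp, hshift,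
        ← integral_sub ((by fun_prop : Continuous _).intervalIntegrable _ _)
          ((by fun_prop : Continuous _).intervalIntegrable _ _)]
      simp only [mul_sub]

theorem abs_second_diff_le (hf : Continuous f) (hg : Continuous g) (hfp : Function.Periodic f T)
    (hgp : Function.Periodic g T) {α β Cf Cg : ℝ} (hfH : ∀ x y, |f x - f y| ≤ Cf * |x - y| ^ α)
    (hgH : ∀ x y, |g x - g y| ≤ Cg * |x - y| ^ β) (t δ : ℝ) :
    |circleConv T f g (t + δ) - 2 * circleConv T f g t + circleConv T f g (t - δ)|
      ≤ Cf * |δ| ^ α * (Cg * |δ| ^ β) * |T| := by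
  rw [second_diff_eq hf hg hfp hgp, ← norm_eq_abs]
  refine (norm_integral_le_of_norm_le_const fun y _ ↦ ?_).trans_eq (by rw [sub_zero])
  have hfδ := hfH (t + δ - y) (t - y)
  have hgδ := hgH y (y - δ)
  rw [sub_sub_sub_cancel_right, add_sub_cancel_left] at hfδ
  rw [sub_sub_cancel] at hgδ
  rw [norm_mul, norm_eq_abs, norm_eq_abs]
  exact mul_le_mul hfδ hgδ (abs_nonneg _) ((abs_nonneg _).trans hfδ)

end circleConv

theorem stmt_0_general (α β : ℝ) (hαβ : α + β < 1) :
    ∃ C : ℝ, 0 < C ∧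
      ∀ (f g : ℝ → ℝ) (Cf Cg : ℝ), 0 ≤ Cf → 0 ≤ Cg →
        Continuous f → Continuous g →
        (∀ x, f (x + 2 * Real.pi) = f x) →
        (∀ x, g (x + 2 * Real.pi) = g x) →
        (∀ x y, |f x - f y| ≤ Cf * |x - y| ^ α) →
        (∀ x y, |g x - g y| ≤ Cg * |x - y| ^ β) →
        ∀ t s : ℝ,
          |(∫ x in (0:ℝ)..(2 * Real.pi), f x * g (t - x)) -
            ∫ x in (0:ℝ)..(2 * Real.pi), f x * g (s - x)| ≤
          C * Cf * Cg * |t - s| ^ (α + β) := by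
  refine ⟨2 * π / (2 - 2 ^ (α + β)), div_pos two_pi_pos (two_sub_two_rpow_pos hαβ), ?_⟩
  intro f g Cf Cg _ _ hfc hgc hfp hgp hf hg t s
  obtain ⟨M, hM⟩ := circleConv.exists_abs_le hfc hgc hgp two_pi_pos.ne'
  have hK : ∀ t δ, 0 < δ → |circleConv (2 * π) f g (t + δ) - 2 * circleConv (2 * π) f g t
      + circleConv (2 * π) f g (t - δ)| ≤ 2 * π * Cf * Cg * δ ^ (α + β) := fun t δ hδ ↦
    (circleConv.abs_second_diff_le hfc hgc hfp hgp hf hg t δ).trans_eq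
      (by rw [abs_of_pos hδ, abs_of_pos two_pi_pos, rpow_add hδ]; ring)
  calc _ ≤ 2 * π * Cf * Cg / (2 - 2 ^ (α + β)) * |t - s| ^ (α + β) :=
        abs_sub_le_of_abs_second_diff_le hαβ hM hK t s
    _ = _ := by ring

/-- Regularity of circle convolution of Hölder functions, case `α + β < 1`:
the convolution is `(α+β)`-Hölder with a constant depending only on `α` and `β`. -/
theorem stmt_0 (α β : ℝ) (hα : α ∈ Set.Ioo (0:ℝ) 1) (hβ : β ∈ Set.Ioo (0:ℝ) 1)
    (hαβ : α + β < 1) :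
    ∃ C : ℝ, 0 < C ∧
      ∀ (f g : ℝ → ℝ) (Cf Cg : ℝ), 0 ≤ Cf → 0 ≤ Cg →
        Continuous f → Continuous g →
        (∀ x, f (x + 2 * Real.pi) = f x) →
        (∀ x, g (x + 2 * Real.pi) = g x) →
        (∀ x y, |f x - f y| ≤ Cf * |x - y| ^ α) →
        (∀ x y, |g x - g y| ≤ Cg * |x - y| ^ β) →
        ∀ t s : ℝ,
          |(∫ x in (0:ℝ)..(2 * Real.pi), f x * g (t - x)) -
            ∫ x in (0:ℝ)..(2 * Real.pi), f x * g (s - x)| ≤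
          C * Cf * Cg * |t - s| ^ (α + β) :=
  stmt_0_general α β hαβ
end

section
/- Let α, β ∈ (0,1) with α + β = 1. There exists a constant C depending only on α and β such that for all continuous 2π-periodic functions f, g : ℝ → ℝ, if f is α-Hölder with constant C_f and g is β-Hölder with constant C_g, then their circle convolution h satisfies |h(t) − h(s)| ≤ C · C_f · C_g · |t − s| · |log |t − s|| for all t, s ∈ ℝ with 0 < |t − s| ≤ 1/2 (i.e., h has Zygmund-type modulus of continuity |t log t|). -/
/-!
The first difference of `H = f ⋆ g` is `∫ (f (x + δ) - f x) g (s - x) dx`, so its second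
difference is `∫ (f (x + δ) - f x) (g (s + δ - x) - g (s - x)) dx = O(δ ^ (α + β)) = O(δ)`.
Writing `H (s + δ) - H s = (H (s + 2δ) - H s) / 2 - Δ²/2` and doubling the step
`n ≈ log₂ δ⁻¹` times, until it is of size about `1`, costs `O(δ)` per doubling, hence
`O(δ |log δ|)` in total. At the coarsest scale `H` oscillates boundedly, because replacing `f` by
`f - f 0` only shifts `H` by a constant.
-/

open Real Function intervalIntegral

section PeriodicConvolution

variable {f g : ℝ → ℝ} {T : ℝ}

noncomputable def periodicConv (T : ℝ) (f g : ℝ → ℝ) (t : ℝ) : ℝ :=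
  ∫ x in (0 : ℝ)..T, f x * g (t - x)

theorem Function.Periodic.intervalIntegral_comp_sub_left_s1 (hg : Periodic g T) (t : ℝ) :
    ∫ x in (0 : ℝ)..T, g (t - x) = ∫ x in (0 : ℝ)..T, g x := by
  rw [integral_comp_sub_left, sub_zero]
  have := hg.intervalIntegral_add_eq (t - T) 0
  rwa [sub_add_cancel, zero_add] at this

theorem periodicConv_sub_eq_integral_sub_mul (hf : Continuous f) (hg : Continuous g)
    (hgT : Periodic g T) (c t s : ℝ) :
    periodicConv T f g t - periodicConv T f g s =
      ∫ x in (0 : ℝ)..T, (f x - c) * (g (t - x) - g (s - x)) := by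
  have hint : ∀ u, IntervalIntegrable (fun x => g (u - x)) MeasureTheory.volume 0 T :=
    fun u => (by fun_prop : Continuous fun x => g (u - x)).intervalIntegrable _ _
  have hint_mul : ∀ u, IntervalIntegrable (fun x => f x * g (u - x)) MeasureTheory.volume 0 T :=
    fun u => (by fun_prop : Continuous fun x => f x * g (u - x)).intervalIntegrable _ _
  have hexpand : (fun x => (f x - c) * (g (t - x) - g (s - x))) =
      fun x => (f x * g (t - x) - f x * g (s - x)) - (c * g (t - x) - c * g (s - x)) := by
    funext x; ring
  rw [hexpand, integral_sub ((hint_mul t).sub (hint_mul s))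
      (((hint t).const_mul c).sub ((hint s).const_mul c)),
    integral_sub (hint_mul t) (hint_mul s),
    integral_sub ((hint t).const_mul c) ((hint s).const_mul c),
    integral_const_mul, integral_const_mul,
    hgT.intervalIntegral_comp_sub_left_s1 t, hgT.intervalIntegral_comp_sub_left_s1 s, sub_self, sub_zero]
  rfl

theorem abs_periodicConv_sub_le {α β Cf Cg : ℝ} (hα : 0 ≤ α) (hf : Continuous f)
    (hg : Continuous g) (hgT : Periodic g T)
    (hf_holder : ∀ x y, |f x - f y| ≤ Cf * |x - y| ^ α)
    (hg_holder : ∀ x y, |g x - g y| ≤ Cg * |x - y| ^ β) (t s : ℝ) :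
    |periodicConv T f g t - periodicConv T f g s| ≤
      (Cf * |T| ^ α) * (Cg * |t - s| ^ β) * |T| := by
  rw [periodicConv_sub_eq_integral_sub_mul hf hg hgT (f 0) t s, ← Real.norm_eq_abs]
  refine (norm_integral_le_of_norm_le_const fun x hx => ?_).trans_eq (by rw [sub_zero])
  have hCf : 0 ≤ Cf := by simpa using (abs_nonneg _).trans (hf_holder 1 0)
  have hx_le : |x| ≤ |T| := by
    simpa using Set.abs_sub_left_of_mem_uIcc (Set.uIoc_subset_uIcc hx)
  have hf_bound : |f x - f 0| ≤ Cf * |T| ^ α := by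
    refine (hf_holder x 0).trans (mul_le_mul_of_nonneg_left ?_ hCf)
    rw [sub_zero]
    exact rpow_le_rpow (abs_nonneg x) hx_le hα
  have hg_bound : |g (t - x) - g (s - x)| ≤ Cg * |t - s| ^ β := by
    simpa using hg_holder (t - x) (s - x)
  rw [Real.norm_eq_abs, abs_mul]
  exact mul_le_mul hf_bound hg_bound (abs_nonneg _) ((abs_nonneg _).trans hf_bound)

theorem periodicConv_add_sub (hf : Continuous f) (hg : Continuous g)
    (hfT : Periodic f T) (hgT : Periodic g T) (s δ : ℝ) :
    periodicConv T f g (s + δ) - periodicConv T f g s =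
      ∫ x in (0 : ℝ)..T, (f (x + δ) - f x) * g (s - x) := by
  have hper : Periodic (fun x => f x * g (s + δ - x)) T := fun x => by
    simp only [hfT x, ← sub_sub, hgT.sub_eq]
  have hshift : periodicConv T f g (s + δ) = ∫ x in (0 : ℝ)..T, f (x + δ) * g (s - x) := by
    have := integral_comp_add_right (fun x => f x * g (s + δ - x)) δ (a := 0) (b := T)
    simp only [add_sub_add_right_eq_sub] at this
    rw [this, zero_add, add_comm T, hper.intervalIntegral_add_eq δ 0, zero_add]
    rfl
  rw [hshift, periodicConv, ← integral_sub]
  · simp only [sub_mul]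
  all_goals exact Continuous.intervalIntegrable (by fun_prop) _ _

theorem periodicConv_second_diff (hf : Continuous f) (hg : Continuous g)
    (hfT : Periodic f T) (hgT : Periodic g T) (s δ : ℝ) :
    periodicConv T f g (s + 2 * δ) - 2 * periodicConv T f g (s + δ) + periodicConv T f g s =
      ∫ x in (0 : ℝ)..T, (f (x + δ) - f x) * (g (s + δ - x) - g (s - x)) := by
  calc _ = (periodicConv T f g (s + δ + δ) - periodicConv T f g (s + δ)) -
        (periodicConv T f g (s + δ) - periodicConv T f g s) := by ring_nf
    _ = _ := by
      rw [periodicConv_add_sub hf hg hfT hgT, periodicConv_add_sub hf hg hfT hgT, ← integral_sub]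
      · simp only [mul_sub]
      all_goals exact Continuous.intervalIntegrable (by fun_prop) _ _

theorem abs_periodicConv_second_diff_le {α β Cf Cg : ℝ} (hf : Continuous f) (hg : Continuous g)
    (hfT : Periodic f T) (hgT : Periodic g T)
    (hf_holder : ∀ x y, |f x - f y| ≤ Cf * |x - y| ^ α)
    (hg_holder : ∀ x y, |g x - g y| ≤ Cg * |x - y| ^ β) (s δ : ℝ) :
    |periodicConv T f g (s + 2 * δ) - 2 * periodicConv T f g (s + δ) + periodicConv T f g s| ≤
      (Cf * |δ| ^ α) * (Cg * |δ| ^ β) * |T| := by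
  rw [periodicConv_second_diff hf hg hfT hgT, ← Real.norm_eq_abs]
  refine (norm_integral_le_of_norm_le_const fun x _ => ?_).trans_eq (by rw [sub_zero])
  have hf_bound : |f (x + δ) - f x| ≤ Cf * |δ| ^ α := by simpa using hf_holder (x + δ) x
  have hg_bound : |g (s + δ - x) - g (s - x)| ≤ Cg * |δ| ^ β := by
    simpa using hg_holder (s + δ - x) (s - x)
  rw [Real.norm_eq_abs, abs_mul]
  exact mul_le_mul hf_bound hg_bound (abs_nonneg _) ((abs_nonneg _).trans hf_bound)

end PeriodicConvolution

section SecondDifference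

variable {H : ℝ → ℝ} {M A : ℝ}

theorem abs_add_sub_le_of_second_diff_le_dyadic
    (hM : ∀ s δ, 0 < δ → δ ≤ 1 → |H (s + δ) - H s| ≤ M)
    (hA : ∀ s δ, 0 < δ → |H (s + 2 * δ) - 2 * H (s + δ) + H s| ≤ A * δ)
    (n : ℕ) {s δ : ℝ} (hδ : 0 < δ) (hnδ : 2 ^ n * δ ≤ 1) :
    |H (s + δ) - H s| ≤ M / 2 ^ n + n * (A / 2) * δ := by
  induction n generalizing δ with
  | zero => simpa using hM s δ hδ (by simpa using hnδ)
  | succ n ih =>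
    have h2δ : |H (s + 2 * δ) - H s| ≤ M / 2 ^ n + n * (A / 2) * (2 * δ) :=
      ih (by positivity) (by rw [pow_succ] at hnδ; linarith)
    have hsplit : H (s + δ) - H s =
        ((H (s + 2 * δ) - H s) - (H (s + 2 * δ) - 2 * H (s + δ) + H s)) / 2 := by ring
    calc |H (s + δ) - H s|
        ≤ (|H (s + 2 * δ) - H s| + |H (s + 2 * δ) - 2 * H (s + δ) + H s|) / 2 := by
          rw [hsplit, abs_div, abs_two]
          gcongr
          exact abs_sub _ _
      _ ≤ ((M / 2 ^ n + n * (A / 2) * (2 * δ)) + A * δ) / 2 := by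
          gcongr
          exact hA s δ hδ
      _ = M / 2 ^ (n + 1) + (n + 1 : ℕ) * (A / 2) * δ := by
          push_cast
          rw [pow_succ]
          field_simp
          ring

theorem abs_add_sub_le_mul_abs_log_of_second_diff_le
    (hM : ∀ s δ, 0 < δ → δ ≤ 1 → |H (s + δ) - H s| ≤ M)
    (hA : ∀ s δ, 0 < δ → |H (s + 2 * δ) - 2 * H (s + δ) + H s| ≤ A * δ)
    {s δ : ℝ} (hδ : 0 < δ) (hδ_le : δ ≤ 1 / 2) :
    |H (s + δ) - H s| ≤ (2 * M + A / 2) / log 2 * δ * |log δ| := by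
  have hM0 : 0 ≤ M := (abs_nonneg _).trans (hM 0 1 one_pos le_rfl)
  have hA0 : 0 ≤ A := by simpa using (abs_nonneg _).trans (hA 0 1 one_pos)
  have hlog2 : 0 < log 2 := log_pos one_lt_two
  have hinv : 2 ≤ δ⁻¹ := by rw [le_inv_comm₀ two_pos hδ]; linarith
  obtain ⟨n, hn, hn_succ⟩ := exists_nat_pow_near (one_le_two.trans hinv) one_lt_two
  have habs_log : |log δ| = log δ⁻¹ := by
    rw [log_inv, abs_of_neg (log_neg hδ (by linarith))]
  have hn_log : n ≤ |log δ| / log 2 := by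
    rw [le_div_iff₀ hlog2, habs_log, ← log_pow]
    exact log_le_log (by positivity) (by exact_mod_cast hn)
  have hlog2_le : log 2 ≤ |log δ| := by
    rw [habs_log]; exact log_le_log two_pos hinv
  have hpow_inv : 1 / 2 ^ n ≤ 2 * δ := by
    rw [div_le_iff₀ (by positivity)]
    rw [inv_lt_iff_one_lt_mul₀ hδ, pow_succ] at hn_succ
    linarith
  calc |H (s + δ) - H s|
      ≤ M / 2 ^ n + n * (A / 2) * δ :=
        abs_add_sub_le_of_second_diff_le_dyadic hM hA n hδ
          (by rwa [← one_div, le_div_iff₀ hδ] at hn)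
    _ ≤ M * (2 * δ) * (|log δ| / log 2) + |log δ| / log 2 * (A / 2) * δ := by
        have hK : 1 ≤ |log δ| / log 2 := (one_le_div hlog2).2 hlog2_le
        have hM_le : M / 2 ^ n ≤ M * (2 * δ) := by
          rw [div_eq_mul_one_div M]; exact mul_le_mul_of_nonneg_left hpow_inv hM0
        gcongr
        exact hM_le.trans (le_mul_of_one_le_right (by positivity) hK)
    _ = (2 * M + A / 2) / log 2 * δ * |log δ| := by
        field_simp

theorem abs_sub_le_mul_abs_log_of_second_diff_le
    (hM : ∀ s δ, 0 < δ → δ ≤ 1 → |H (s + δ) - H s| ≤ M)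
    (hA : ∀ s δ, 0 < δ → |H (s + 2 * δ) - 2 * H (s + δ) + H s| ≤ A * δ)
    {t s : ℝ} (hts : 0 < |t - s|) (hts_le : |t - s| ≤ 1 / 2) :
    |H t - H s| ≤ (2 * M + A / 2) / log 2 * |t - s| * |log (|t - s|)| := by
  wlog hst : s < t generalizing t s
  · rw [abs_sub_comm t s] at hts hts_le ⊢
    rw [abs_sub_comm]
    exact this hts hts_le (lt_of_le_of_ne (not_lt.1 hst) fun h => by simp [h] at hts)
  obtain ⟨δ, hδ, rfl⟩ : ∃ δ, 0 < δ ∧ t = s + δ := ⟨t - s, sub_pos.2 hst, by ring⟩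
  rw [add_sub_cancel_left, abs_of_pos hδ] at hts_le ⊢
  exact abs_add_sub_le_mul_abs_log_of_second_diff_le hM hA hδ hts_le

end SecondDifference

/-- Regularity of circle convolution of Hölder functions, case `α + β = 1`:
the convolution has Zygmund-type modulus of continuity `|t log t|`. -/
theorem stmt_1 (α β : ℝ) (hα : α ∈ Set.Ioo (0:ℝ) 1) (hβ : β ∈ Set.Ioo (0:ℝ) 1)
    (hαβ : α + β = 1) :
    ∃ C : ℝ, 0 < C ∧
      ∀ (f g : ℝ → ℝ) (Cf Cg : ℝ), 0 ≤ Cf → 0 ≤ Cg →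
        Continuous f → Continuous g →
        (∀ x, f (x + 2 * Real.pi) = f x) →
        (∀ x, g (x + 2 * Real.pi) = g x) →
        (∀ x y, |f x - f y| ≤ Cf * |x - y| ^ α) →
        (∀ x y, |g x - g y| ≤ Cg * |x - y| ^ β) →
        ∀ t s : ℝ, 0 < |t - s| → |t - s| ≤ 1 / 2 →
          |(∫ x in (0:ℝ)..(2 * Real.pi), f x * g (t - x)) -
            ∫ x in (0:ℝ)..(2 * Real.pi), f x * g (s - x)| ≤
          C * Cf * Cg * |t - s| * |Real.log (|t - s|)| := by
  set T := 2 * π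
  have hT : 0 < T := by positivity
  refine ⟨(2 * (T ^ α * T) + T / 2) / log 2, by positivity, ?_⟩
  intro f g Cf Cg hCf hCg hf hg hfT hgT hf_holder hg_holder t s hts hts_le
  have hM : ∀ s δ, 0 < δ → δ ≤ 1 →
      |periodicConv T f g (s + δ) - periodicConv T f g s| ≤ Cf * Cg * (T ^ α * T) := by
    intro s δ hδ hδ_le
    have hδβ : δ ^ β ≤ 1 := rpow_le_one hδ.le hδ_le hβ.1.le
    calc _ ≤ (Cf * |T| ^ α) * (Cg * |s + δ - s| ^ β) * |T| :=
          abs_periodicConv_sub_le hα.1.le hf hg hgT hf_holder hg_holder _ _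
      _ ≤ (Cf * T ^ α) * (Cg * 1) * T := by
          rw [add_sub_cancel_left, abs_of_pos hδ, abs_of_pos hT]; gcongr
      _ = Cf * Cg * (T ^ α * T) := by ring
  have hA : ∀ s δ, 0 < δ → |periodicConv T f g (s + 2 * δ) - 2 * periodicConv T f g (s + δ) +
      periodicConv T f g s| ≤ Cf * Cg * T * δ := by
    intro s δ hδ
    calc _ ≤ (Cf * |δ| ^ α) * (Cg * |δ| ^ β) * |T| :=
          abs_periodicConv_second_diff_le hf hg hfT hgT hf_holder hg_holder s δ
      _ = Cf * Cg * T * δ ^ (α + β) := by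
          rw [abs_of_pos hδ, abs_of_pos hT, rpow_add hδ]; ring
      _ = Cf * Cg * T * δ := by rw [hαβ, rpow_one]
  refine (abs_sub_le_mul_abs_log_of_second_diff_le hM hA hts hts_le).trans_eq ?_
  ring
end

section
/- Let α ∈ (0,1). There is an absolute constant C such that for every continuous 2π-periodic function f : ℝ → ℝ which is α-Hölder with constant C_f, and every integer k ≥ 0, the Fourier coefficients of f satisfy the dyadic block estimate ∑_{n ∈ ℤ, 2^k ≤ |n| ≤ 2^{k+1}} |f̂(n)|² ≤ C · C_f² · 2^(−2kα). -/
/-!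
Bernstein's argument. For a shift `a`, the Fourier coefficients of `x ↦ f (x + a) - f x` are
`(e^{ina} - 1) f̂(n)`, and its sup norm is at most `C_f a^α`; Bessel's inequality therefore gives
`∑ |e^{ina} - 1|² |f̂(n)|² ≤ C_f² a^{2α}`. With `a = 2π / 2^(k+2)` every `n` of the `k`-th dyadic
block has `π/2 ≤ |n a| ≤ π`, where `|e^{ina} - 1|² = 2 - 2 cos (n a) ≥ 2`.
-/

open MeasureTheory Complex AddCircle

theorem Complex.two_le_norm_exp_I_mul_sub_one_sq {θ : ℝ} (h₁ : Real.pi / 2 ≤ |θ|)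
    (h₂ : |θ| ≤ Real.pi) : 2 ≤ ‖exp (I * θ) - 1‖ ^ 2 := by
  have hcos : Real.cos θ ≤ 0 := by
    rw [← Real.cos_abs]
    exact Real.cos_nonpos_of_pi_div_two_le_of_le h₁ (by linarith [Real.pi_pos])
  have hcos_half : Real.cos θ = 1 - 2 * Real.sin (θ / 2) ^ 2 := by
    rw [Real.sin_sq, Real.cos_sq, show 2 * (θ / 2) = θ by ring]
    ring
  rw [norm_exp_I_mul_ofReal_sub_one, norm_mul, Real.norm_eq_abs, Real.norm_eq_abs, mul_pow,
    sq_abs, sq_abs]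
  linarith

namespace AddCircle

variable {T : ℝ}

theorem fourier_add_right (n : ℤ) (x a : AddCircle T) :
    fourier n (x + a) = fourier n x * fourier n a := by
  simp only [fourier_apply, smul_add, toCircle_add, Circle.coe_mul]

variable [hT : Fact (0 < T)]

theorem fourierCoeff_comp_add_right {E : Type*} [NormedAddCommGroup E] [NormedSpace ℂ E]
    (F : AddCircle T → E) (a : AddCircle T) (n : ℤ) :
    fourierCoeff (fun x => F (x + a)) n = fourier n a • fourierCoeff F n := by
  have hshift : ∀ x, fourier (-n) x • F (x + a) =
      fourier n a • (fourier (-n) (x + a) • F (x + a)) := by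
    intro x
    rw [smul_smul, fourier_add_right, mul_left_comm, ← fourier_add, add_neg_cancel, fourier_zero,
      mul_one]
  simp only [fourierCoeff, hshift, integral_smul]
  rw [integral_add_right_eq_self (fun x => fourier (-n) x • F x) a]

theorem fourierCoeff_comp_add_right_sub (F : C(AddCircle T, ℂ)) (a : AddCircle T) (n : ℤ) :
    fourierCoeff (fun x => F (x + a) - F x) n = (fourier n a - 1) * fourierCoeff F n := by
  have hF : Integrable F haarAddCircle :=
    F.continuous.integrable_of_hasCompactSupport (.of_compactSpace _)
  rw [sub_mul, one_mul, ← smul_eq_mul, ← fourierCoeff_comp_add_right]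
  simp only [fourierCoeff, smul_sub]
  exact integral_sub ((hF.comp_add_right a).fourier_smul _) (hF.fourier_smul _)

theorem sum_sq_norm_fourierCoeff_le_sq (F : C(AddCircle T, ℂ)) {M : ℝ} (hM : ∀ x, ‖F x‖ ≤ M)
    (s : Finset ℤ) : ∑ n ∈ s, ‖fourierCoeff F n‖ ^ 2 ≤ M ^ 2 := by
  have parseval := hasSum_sq_fourierCoeff (ContinuousMap.toLp 2 haarAddCircle ℂ F)
  simp only [fourierCoeff_toLp] at parseval
  refine (sum_le_hasSum s (fun _ _ => by positivity) parseval).trans ?_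
  calc ∫ t, ‖ContinuousMap.toLp 2 haarAddCircle ℂ F t‖ ^ 2 ∂haarAddCircle
      = ∫ t, ‖F t‖ ^ 2 ∂haarAddCircle := by
        refine integral_congr_ae ?_
        filter_upwards [ContinuousMap.coeFn_toLp (p := 2) (μ := haarAddCircle) (𝕜 := ℂ) F]
          with t ht
        rw [ht]
    _ ≤ ∫ _, M ^ 2 ∂haarAddCircle :=
        integral_mono_of_nonneg (.of_forall fun _ => by positivity) (integrable_const _)
          (.of_forall fun t => pow_le_pow_left₀ (norm_nonneg _) (hM t) 2)
    _ = M ^ 2 := by simp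

theorem sum_sq_norm_fourierCoeff_le_half_sq (F : C(AddCircle T, ℂ)) (a : AddCircle T) {M : ℝ}
    (hM : ∀ x, ‖F (x + a) - F x‖ ≤ M) (s : Finset ℤ)
    (hs : ∀ n ∈ s, 2 ≤ ‖fourier n a - 1‖ ^ 2) :
    ∑ n ∈ s, ‖fourierCoeff F n‖ ^ 2 ≤ M ^ 2 / 2 := by
  let G : C(AddCircle T, ℂ) := ⟨fun x => F (x + a) - F x, by fun_prop⟩
  have hG : ∑ n ∈ s, ‖fourierCoeff G n‖ ^ 2 ≤ M ^ 2 := sum_sq_norm_fourierCoeff_le_sq G hM s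
  have hcoeff : ∀ n ∈ s, 2 * ‖fourierCoeff F n‖ ^ 2 ≤ ‖fourierCoeff G n‖ ^ 2 := by
    intro n hn
    rw [show ⇑G = fun x => F (x + a) - F x from rfl, fourierCoeff_comp_add_right_sub, norm_mul,
      mul_pow]
    exact mul_le_mul_of_nonneg_right (hs n hn) (by positivity)
  have hsum := Finset.sum_le_sum hcoeff
  rw [← Finset.mul_sum] at hsum
  linarith

theorem two_le_norm_fourier_coe_sub_one_sq {n : ℤ} {a : ℝ} (h₁ : T / 4 ≤ |n * a|)
    (h₂ : |n * a| ≤ T / 2) : 2 ≤ ‖fourier n (a : AddCircle T) - 1‖ ^ 2 := by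
  have hT0 := hT.out
  have hθ : |2 * Real.pi * n * a / T| = 2 * Real.pi / T * |n * a| := by
    rw [abs_div, abs_of_pos hT0, mul_assoc, abs_mul, abs_of_pos Real.two_pi_pos]
    ring
  rw [fourier_coe_apply, show 2 * Real.pi * I * n * a / T = I * ↑(2 * Real.pi * n * a / T) by
    push_cast; ring]
  refine Complex.two_le_norm_exp_I_mul_sub_one_sq ?_ ?_
  · rw [hθ, div_mul_eq_mul_div, le_div_iff₀ hT0]
    nlinarith [mul_le_mul_of_nonneg_left h₁ Real.two_pi_pos.le]
  · rw [hθ, div_mul_eq_mul_div, div_le_iff₀ hT0]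
    nlinarith [mul_le_mul_of_nonneg_left h₂ Real.two_pi_pos.le]

theorem two_le_norm_fourier_sub_one_sq_of_dyadic {k : ℕ} {n : ℤ} (h₁ : 2 ^ k ≤ |n|)
    (h₂ : |n| ≤ 2 ^ (k + 1)) : 2 ≤ ‖fourier n ((T / 2 ^ (k + 2) : ℝ) : AddCircle T) - 1‖ ^ 2 := by
  have hT0 := hT.out
  have h₁' : (2 : ℝ) ^ k ≤ |(n : ℝ)| := by exact_mod_cast h₁
  have h₂' : |(n : ℝ)| ≤ 2 * 2 ^ k := by rw [← pow_succ']; exact_mod_cast h₂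
  have hn : |n * (T / 2 ^ (k + 2))| = |(n : ℝ)| * T / 2 ^ (k + 2) := by
    rw [abs_mul, abs_of_pos (a := T / 2 ^ (k + 2)) (by positivity)]; ring
  have h4 : (2 : ℝ) ^ (k + 2) = 4 * 2 ^ k := by ring
  apply two_le_norm_fourier_coe_sub_one_sq
  · rw [hn, le_div_iff₀ (by positivity)]
    nlinarith [mul_le_mul_of_nonneg_left h₁' hT0.le]
  · rw [hn, div_le_iff₀ (by positivity)]
    nlinarith [mul_le_mul_of_nonneg_left h₂' hT0.le]

end AddCircle

theorem Function.Periodic.continuous_lift {T : ℝ} {f : ℝ → ℂ} (hf : Function.Periodic f T)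
    (hc : Continuous f) : Continuous (hf.lift : AddCircle T → ℂ) :=
  hc.quotient_liftOn' _

theorem Function.Periodic.fourierCoeff_lift [Fact (0 < 2 * Real.pi)] {f : ℝ → ℂ}
    (hf : Function.Periodic f (2 * Real.pi)) (n : ℤ) :
    fourierCoeff (hf.lift : AddCircle (2 * Real.pi) → ℂ) n =
      1 / (2 * (Real.pi : ℂ)) * ∫ x in (0 : ℝ)..2 * Real.pi, f x * exp (-(I * n * x)) := by
  rw [fourierCoeff_eq_intervalIntegral _ n 0, zero_add, Complex.real_smul]
  push_cast
  congr 1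
  refine intervalIntegral.integral_congr fun x _ => ?_
  rw [hf.lift_coe, fourier_coe_apply, smul_eq_mul, mul_comm]
  congr 2
  push_cast
  field_simp

theorem Real.rpow_two_pi_div_two_pow_sq (α : ℝ) (k : ℕ) :
    ((2 * Real.pi / 2 ^ (k + 2)) ^ α) ^ 2 =
      (Real.pi / 2) ^ (2 * α) * (2 : ℝ) ^ (-(2 * (k : ℝ) * α)) := by
  have hsplit : 2 * Real.pi / 2 ^ (k + 2) = Real.pi / 2 * (2 : ℝ) ^ (-(k : ℝ)) := by
    rw [Real.rpow_neg zero_le_two, Real.rpow_natCast, pow_add]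
    field_simp
  have hsq : ∀ x : ℝ, 0 ≤ x → (x ^ α) ^ 2 = x ^ (2 * α) := fun x hx => by
    rw [← Real.rpow_natCast, ← Real.rpow_mul hx]; ring_nf
  rw [hsplit, Real.mul_rpow (by positivity) (by positivity), mul_pow, hsq _ (by positivity),
    hsq _ (by positivity), ← Real.rpow_mul zero_le_two]
  ring_nf

theorem stmt_3_general (α : ℝ) :
    ∃ C : ℝ, 0 < C ∧
      ∀ (f : ℝ → ℝ) (Cf : ℝ), 0 ≤ Cf → Continuous f →
        (∀ x, f (x + 2 * Real.pi) = f x) →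
        (∀ x y, |f x - f y| ≤ Cf * |x - y| ^ α) →
        ∀ k : ℕ,
          ∑ n ∈ (Finset.Icc (-(2 ^ (k + 1) : ℤ)) (2 ^ (k + 1))).filter
              (fun n => (2 : ℤ) ^ k ≤ |n|),
            ‖(1 / (2 * (Real.pi : ℂ))) *
                ∫ x in (0:ℝ)..(2 * Real.pi),
                  (f x : ℂ) * Complex.exp (-(Complex.I * (n : ℂ) * (x : ℂ)))‖ ^ 2
            ≤ C * Cf ^ 2 * (2 : ℝ) ^ (-(2 * (k : ℝ) * α)) := by
  refine ⟨(Real.pi / 2) ^ (2 * α) / 2, by positivity, fun f Cf _ hfc hper hHol k => ?_⟩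
  have : Fact (0 < 2 * Real.pi) := ⟨Real.two_pi_pos⟩
  have hperC : Function.Periodic (fun x => (f x : ℂ)) (2 * Real.pi) := fun x => by
    simp only [hper]
  let F : C(AddCircle (2 * Real.pi), ℂ) := ⟨hperC.lift, hperC.continuous_lift (by fun_prop)⟩
  set h : ℝ := 2 * Real.pi / 2 ^ (k + 2)
  have hshift : ∀ x, ‖F (x + h) - F x‖ ≤ Cf * h ^ α := by
    intro x
    induction x using QuotientAddGroup.induction_on with | H y => ?_
    have hy := hHol (y + h) y
    rw [add_sub_cancel_left, abs_of_pos (by positivity : 0 < h)] at hy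
    change ‖(f (y + h) : ℂ) - f y‖ ≤ _
    rwa [← Complex.ofReal_sub, Complex.norm_real]
  have hdyadic : ∀ n ∈ (Finset.Icc (-(2 ^ (k + 1) : ℤ)) (2 ^ (k + 1))).filter
      (fun n => (2 : ℤ) ^ k ≤ |n|), 2 ≤ ‖fourier n (h : AddCircle (2 * Real.pi)) - 1‖ ^ 2 := by
    intro n hn
    rw [Finset.mem_filter, Finset.mem_Icc, ← abs_le] at hn
    exact two_le_norm_fourier_sub_one_sq_of_dyadic hn.2 hn.1
  simp only [← hperC.fourierCoeff_lift]
  calc _ ≤ (Cf * h ^ α) ^ 2 / 2 := sum_sq_norm_fourierCoeff_le_half_sq F h hshift _ hdyadic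
    _ = _ := by rw [mul_pow, Real.rpow_two_pi_div_two_pow_sq]; ring

/-- Dyadic block estimate for the Fourier coefficients of an `α`-Hölder
`2π`-periodic function:
`∑_{2^k ≤ |n| ≤ 2^{k+1}} |f̂(n)|² ≤ C · C_f² · 2^(−2kα)`. -/
theorem stmt_3 (α : ℝ) (hα : α ∈ Set.Ioo (0:ℝ) 1) :
    ∃ C : ℝ, 0 < C ∧
      ∀ (f : ℝ → ℝ) (Cf : ℝ), 0 ≤ Cf → Continuous f →
        (∀ x, f (x + 2 * Real.pi) = f x) →
        (∀ x y, |f x - f y| ≤ Cf * |x - y| ^ α) →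
        ∀ k : ℕ,
          ∑ n ∈ (Finset.Icc (-(2 ^ (k + 1) : ℤ)) (2 ^ (k + 1))).filter
              (fun n => (2 : ℤ) ^ k ≤ |n|),
            ‖(1 / (2 * (Real.pi : ℂ))) *
                ∫ x in (0:ℝ)..(2 * Real.pi),
                  (f x : ℂ) * Complex.exp (-(Complex.I * (n : ℂ) * (x : ℂ)))‖ ^ 2
            ≤ C * Cf ^ 2 * (2 : ℝ) ^ (-(2 * (k : ℝ) * α)) :=
  stmt_3_general α
end

section
/- Let α, β ∈ (0,1). There is an absolute constant C such that for all continuous 2π-periodic functions f, g : ℝ → ℝ, if f is α-Hölder with constant C_f and g is β-Hölder with constant C_g, and h is their circle convolution, then for every integer k ≥ 0: ∑_{n ∈ ℤ, 2^k ≤ |n| ≤ 2^{k+1}} |ĥ(n)| ≤ C · C_f · C_g · 2^(−k(α+β)). -/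
/-!
Since `ĥ(n) = 2π f̂(n) ĝ(n)`, Cauchy–Schwarz reduces the block sum to the product of the
`ℓ²`-norms of `f̂` and `ĝ` over the block. These are controlled by the increment
`u(· + h) - u` with `h = π / 2^(k+1)`: its coefficients are `(e^{inh} - 1) û(n)`, and on the
block `|nh| ∈ [π/2, π]`, so `|e^{inh} - 1|² ≥ 2`. Bessel's inequality for the increment,
which is bounded by `C h^α` by Hölder continuity, then gives
`∑_block |û(n)|² ≤ C² h^(2α) / 2`.
-/

open MeasureTheory Real Function

theorem fourier_apply_add {T : ℝ} (n : ℤ) (x y : AddCircle T) :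
    fourier n (x + y) = fourier n x * fourier n y := by
  simp only [fourier_apply, smul_add, AddCircle.toCircle_add, Circle.coe_mul]

theorem fourier_mul_fourier_neg {T : ℝ} (n : ℤ) (x : AddCircle T) :
    fourier n x * fourier (-n) x = 1 := by
  rw [← fourier_add, add_neg_cancel, fourier_zero]

theorem norm_fourier_coe_sub_one_sq {T : ℝ} (n : ℤ) (x : ℝ) :
    ‖fourier n (x : AddCircle T) - 1‖ ^ 2 = 2 - 2 * cos (2 * π * n * x / T) := by
  set θ := 2 * π * n * x / T
  have hθ : fourier n (x : AddCircle T) = Complex.exp (θ * Complex.I) := by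
    rw [fourier_coe_apply]; push_cast [θ]; ring_nf
  rw [hθ, Complex.sq_norm, Complex.normSq_apply]
  simp only [Complex.sub_re, Complex.sub_im, Complex.exp_ofReal_mul_I_re,
    Complex.exp_ofReal_mul_I_im, Complex.one_re, Complex.one_im]
  nlinarith [sin_sq_add_cos_sq θ]

theorem intervalIntegral_integral_swap_of_continuous {E : Type*} [NormedAddCommGroup E]
    [NormedSpace ℝ E] {a b c d : ℝ} (hab : a ≤ b) (hcd : c ≤ d) {F : ℝ → ℝ → E}
    (hF : Continuous (uncurry F)) :
    ∫ x in a..b, ∫ y in c..d, F x y = ∫ y in c..d, ∫ x in a..b, F x y := by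
  have hint : Integrable (uncurry F)
      ((volume.restrict (Set.Ioc a b)).prod (volume.restrict (Set.Ioc c d))) := by
    rw [Measure.prod_restrict]
    exact (hF.continuousOn.integrableOn_compact (isCompact_Icc.prod isCompact_Icc)).mono_set
      (Set.prod_mono Set.Ioc_subset_Icc_self Set.Ioc_subset_Icc_self)
  simp only [intervalIntegral.integral_of_le hab, intervalIntegral.integral_of_le hcd]
  exact integral_integral_swap hint

noncomputable def dyadicBlock (k : ℕ) : Finset ℤ :=
  (Finset.Icc (-(2 ^ (k + 1) : ℤ)) (2 ^ (k + 1))).filter (fun n => (2 : ℤ) ^ k ≤ |n|)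

theorem cos_nonpos_of_mem_dyadicBlock {k : ℕ} {n : ℤ} (hn : n ∈ dyadicBlock k) :
    cos (π * n / 2 ^ (k + 1)) ≤ 0 := by
  obtain ⟨hn_Icc, hn_low⟩ := Finset.mem_filter.mp hn
  have hup : |(n : ℝ)| ≤ 2 ^ (k + 1) := by exact_mod_cast abs_le.mpr (Finset.mem_Icc.mp hn_Icc)
  have hlow : (2 : ℝ) ^ k ≤ |(n : ℝ)| := by exact_mod_cast hn_low
  have habs : |π * n / 2 ^ (k + 1)| = π * (|(n : ℝ)| / 2 ^ (k + 1)) := by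
    rw [abs_div, abs_mul, abs_of_pos pi_pos, abs_of_pos (by positivity : (0 : ℝ) < 2 ^ (k + 1)),
      mul_div_assoc]
  rw [← cos_abs, habs]
  apply cos_nonpos_of_pi_div_two_le_of_le
  · rw [pow_succ] at hup ⊢
    have : (1 : ℝ) / 2 ≤ |(n : ℝ)| / (2 ^ k * 2) := by
      rw [le_div_iff₀ (by positivity)]; linarith
    nlinarith [pi_pos]
  · have : |(n : ℝ)| / 2 ^ (k + 1) ≤ 1 := div_le_one_of_le₀ hup (by positivity)
    nlinarith [pi_pos]

section FourierCoeffOn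

variable {a b : ℝ} (hab : a < b)

theorem sum_sq_norm_fourierCoeffOn_le {u : ℝ → ℂ}
    (hu : AEStronglyMeasurable u (volume.restrict (Set.Ioc a b))) {M : ℝ} (hM : ∀ x, ‖u x‖ ≤ M)
    (s : Finset ℤ) : ∑ n ∈ s, ‖fourierCoeffOn hab u n‖ ^ 2 ≤ M ^ 2 := by
  have hL2 : MemLp u 2 (volume.restrict (Set.Ioc a b)) := .of_bound hu M (.of_forall hM)
  refine (sum_le_hasSum s (fun _ _ => sq_nonneg _) (hasSum_sq_fourierCoeffOn hab hL2)).trans ?_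
  have hba : 0 < b - a := sub_pos.2 hab
  have hint : ‖∫ x in a..b, ‖u x‖ ^ 2‖ ≤ M ^ 2 * |b - a| :=
    intervalIntegral.norm_integral_le_of_norm_le_const fun x _ => by
      rw [norm_pow, norm_norm]; exact pow_le_pow_left₀ (norm_nonneg _) (hM x) 2
  rw [Real.norm_eq_abs, abs_of_pos hba] at hint
  calc (b - a)⁻¹ • ∫ x in a..b, ‖u x‖ ^ 2 ≤ (b - a)⁻¹ * (M ^ 2 * (b - a)) := by
        rw [smul_eq_mul]; gcongr; exact (le_abs_self _).trans hint
    _ = M ^ 2 := by field_simp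

theorem fourierCoeffOn_sub {E : Type*} [NormedAddCommGroup E] [NormedSpace ℂ E] {u v : ℝ → E}
    (hu : IntervalIntegrable u volume a b) (hv : IntervalIntegrable v volume a b) (n : ℤ) :
    fourierCoeffOn hab (fun x => u x - v x) n =
      fourierCoeffOn hab u n - fourierCoeffOn hab v n := by
  have he : ContinuousOn (fun x : ℝ => fourier (-n) (x : AddCircle (b - a))) (Set.uIcc a b) :=
    ((fourier (-n)).continuous.comp (AddCircle.continuous_mk' _)).continuousOn
  simp only [fourierCoeffOn_eq_integral, smul_sub,
    intervalIntegral.integral_sub (hu.continuousOn_smul he) (hv.continuousOn_smul he)]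

theorem fourierCoeffOn_comp_add {u : ℝ → ℂ} (hu : Periodic u (b - a)) (h : ℝ) (n : ℤ) :
    fourierCoeffOn hab (fun x => u (x + h)) n =
      fourier n (h : AddCircle (b - a)) * fourierCoeffOn hab u n := by
  set F : ℝ → ℂ := fun x => fourier (-n) (x : AddCircle (b - a)) • u x
  have hF : Periodic F (b - a) := fun x => by simp only [F, AddCircle.coe_add_period, hu x]
  have hshift : ∀ x : ℝ, fourier (-n) (x : AddCircle (b - a)) • u (x + h) =
      fourier n (h : AddCircle (b - a)) • F (x + h) := fun x => by
    simp only [F, smul_eq_mul, AddCircle.coe_add, fourier_apply_add]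
    linear_combination (-(fourier (-n) (x : AddCircle (b - a)) * u (x + h))) *
      fourier_mul_fourier_neg n (h : AddCircle (b - a))
  have hperiod := hF.intervalIntegral_add_eq (a + h) a
  rw [show a + h + (b - a) = b + h by ring, add_sub_cancel] at hperiod
  simp only [fourierCoeffOn_eq_integral, hshift, intervalIntegral.integral_smul,
    intervalIntegral.integral_comp_add_right F h, hperiod, F]
  rw [smul_comm, smul_eq_mul]

theorem fourierCoeffOn_convolution {f g : ℝ → ℂ} (hf : Continuous f) (hg : Continuous g)
    (hg_per : Periodic g (b - a)) (n : ℤ) :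
    fourierCoeffOn hab (fun t => ∫ x in a..b, f x * g (t - x)) n =
      (b - a) * fourierCoeffOn hab f n * fourierCoeffOn hab g n := by
  set e : ℝ → ℂ := fun t => fourier (-n) (t : AddCircle (b - a))
  have he : Continuous e := (fourier (-n)).continuous.comp (AddCircle.continuous_mk' _)
  have hba : b - a ≠ 0 := (sub_pos.2 hab).ne'
  have hinner : ∀ x, ∫ t in a..b, e t * g (t - x) = e x * ∫ t in a..b, e t * g t := fun x => by
    have hshift := fourierCoeffOn_comp_add hab hg_per (-x) n
    have hneg : fourier n ((-x : ℝ) : AddCircle (b - a)) = e x := by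
      simp only [e, fourier_apply, AddCircle.coe_neg, smul_neg, neg_smul]
    simp only [fourierCoeffOn_eq_integral, ← sub_eq_add_neg, hneg, smul_eq_mul,
      mul_smul_comm] at hshift
    exact smul_right_injective ℂ (one_div_ne_zero hba) hshift
  have hconv : ∫ t in a..b, e t * ∫ x in a..b, f x * g (t - x) =
      (∫ x in a..b, e x * f x) * ∫ t in a..b, e t * g t := by
    calc ∫ t in a..b, e t * ∫ x in a..b, f x * g (t - x)
        = ∫ t in a..b, ∫ x in a..b, f x * (e t * g (t - x)) := by
          simp only [← intervalIntegral.integral_const_mul, mul_left_comm]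
      _ = ∫ x in a..b, f x * ∫ t in a..b, e t * g (t - x) := by
          rw [intervalIntegral_integral_swap_of_continuous hab.le hab.le (by fun_prop)]
          simp only [intervalIntegral.integral_const_mul]
      _ = (∫ x in a..b, e x * f x) * ∫ t in a..b, e t * g t := by
          simp only [hinner, ← intervalIntegral.integral_mul_const, mul_left_comm, mul_assoc]
  have he_def : ∀ t : ℝ, fourier (-n) (t : AddCircle (b - a)) = e t := fun _ => rfl
  simp only [fourierCoeffOn_eq_integral, smul_eq_mul, he_def, hconv, Complex.real_smul]
  have hba' : (b : ℂ) - a ≠ 0 := by exact_mod_cast hba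
  push_cast
  field_simp

theorem sum_sq_norm_fourierCoeffOn_le_of_cos_nonpos {u : ℝ → ℂ} (hu : Continuous u)
    (hper : Periodic u (b - a)) {h M : ℝ} (hM : ∀ x, ‖u (x + h) - u x‖ ≤ M) {s : Finset ℤ}
    (hs : ∀ n ∈ s, cos (2 * π * n * h / (b - a)) ≤ 0) :
    ∑ n ∈ s, ‖fourierCoeffOn hab u n‖ ^ 2 ≤ M ^ 2 / 2 := by
  have hshift : Continuous fun x => u (x + h) := hu.comp (continuous_add_const h)
  have hcoeff : ∀ n, fourierCoeffOn hab (fun x => u (x + h) - u x) n =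
      (fourier n (h : AddCircle (b - a)) - 1) * fourierCoeffOn hab u n := fun n => by
    rw [fourierCoeffOn_sub hab (hshift.intervalIntegrable _ _) (hu.intervalIntegrable _ _),
      fourierCoeffOn_comp_add hab hper, sub_mul, one_mul]
  have hbessel := sum_sq_norm_fourierCoeffOn_le hab (u := fun x => u (x + h) - u x)
    (hshift.sub hu).aestronglyMeasurable hM s
  have hpointwise : ∀ n ∈ s, 2 * ‖fourierCoeffOn hab u n‖ ^ 2 ≤
      ‖fourierCoeffOn hab (fun x => u (x + h) - u x) n‖ ^ 2 := fun n hn => by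
    rw [hcoeff, norm_mul, mul_pow, norm_fourier_coe_sub_one_sq]
    gcongr
    linarith [hs n hn]
  have hsum := Finset.sum_le_sum hpointwise
  rw [← Finset.mul_sum] at hsum
  linarith

/-- The step `(b - a) / 2^(k+2)` turns the phase `2π n h / (b - a)` into `π n / 2^(k+1)`. -/
theorem sum_sq_norm_fourierCoeffOn_dyadicBlock_le {u : ℝ → ℂ} (hu : Continuous u)
    (hper : Periodic u (b - a)) {M : ℝ} (k : ℕ)
    (hM : ∀ x, ‖u (x + (b - a) / 2 ^ (k + 2)) - u x‖ ≤ M) :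
    ∑ n ∈ dyadicBlock k, ‖fourierCoeffOn hab u n‖ ^ 2 ≤ M ^ 2 / 2 :=
  sum_sq_norm_fourierCoeffOn_le_of_cos_nonpos hab hu hper hM fun n hn => by
    have hba : b - a ≠ 0 := (sub_pos.2 hab).ne'
    convert cos_nonpos_of_mem_dyadicBlock hn using 2
    field_simp
    ring

theorem sum_norm_mul_fourierCoeffOn_dyadicBlock_le_of_holder {u v : ℝ → ℂ} (hu : Continuous u)
    (hv : Continuous v) (hu_per : Periodic u (b - a)) (hv_per : Periodic v (b - a))
    {Cu Cv α β : ℝ} (hCu : 0 ≤ Cu) (hCv : 0 ≤ Cv)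
    (hu_holder : ∀ x y, ‖u x - u y‖ ≤ Cu * |x - y| ^ α)
    (hv_holder : ∀ x y, ‖v x - v y‖ ≤ Cv * |x - y| ^ β) (k : ℕ) :
    ∑ n ∈ dyadicBlock k, ‖fourierCoeffOn hab u n‖ * ‖fourierCoeffOn hab v n‖ ≤
      Cu * Cv * ((b - a) / 2 ^ (k + 2)) ^ (α + β) / 2 := by
  set h := (b - a) / 2 ^ (k + 2)
  have hh : 0 < h := div_pos (sub_pos.2 hab) (by positivity)
  have hincr : ∀ {w : ℝ → ℂ} {C γ : ℝ}, (∀ x y, ‖w x - w y‖ ≤ C * |x - y| ^ γ) →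
      ∀ x, ‖w (x + h) - w x‖ ≤ C * h ^ γ := fun hw x => by
    simpa [abs_of_pos hh] using hw (x + h) x
  have hu2 := sum_sq_norm_fourierCoeffOn_dyadicBlock_le hab hu hu_per k (hincr hu_holder)
  have hv2 := sum_sq_norm_fourierCoeffOn_dyadicBlock_le hab hv hv_per k (hincr hv_holder)
  calc ∑ n ∈ dyadicBlock k, ‖fourierCoeffOn hab u n‖ * ‖fourierCoeffOn hab v n‖
      ≤ √(∑ n ∈ dyadicBlock k, ‖fourierCoeffOn hab u n‖ ^ 2) *
          √(∑ n ∈ dyadicBlock k, ‖fourierCoeffOn hab v n‖ ^ 2) :=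
        Real.sum_mul_le_sqrt_mul_sqrt _ _ _
    _ ≤ √((Cu * h ^ α) ^ 2 / 2) * √((Cv * h ^ β) ^ 2 / 2) := by gcongr
    _ = Cu * Cv * h ^ (α + β) / 2 := by
        rw [← Real.sqrt_mul (by positivity), show (Cu * h ^ α) ^ 2 / 2 * ((Cv * h ^ β) ^ 2 / 2) =
          (Cu * Cv * h ^ (α + β) / 2) ^ 2 by rw [Real.rpow_add hh]; ring,
          Real.sqrt_sq (by positivity)]

end FourierCoeffOn

theorem fourierCoeffOn_two_pi_pos_eq (u : ℝ → ℂ) (n : ℤ) :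
    fourierCoeffOn two_pi_pos u n = 1 / (2 * (π : ℂ)) *
      ∫ t in (0 : ℝ)..2 * π, u t * Complex.exp (-(Complex.I * n * t)) := by
  have hπ : (π : ℂ) ≠ 0 := Complex.ofReal_ne_zero.mpr pi_ne_zero
  have he : ∀ t : ℝ, fourier (-n) (t : AddCircle (2 * π - 0)) =
      Complex.exp (-(Complex.I * n * t)) := fun t => by
    rw [fourier_coe_apply]
    congr 1
    push_cast [sub_zero]
    field_simp
  rw [fourierCoeffOn_eq_integral]
  simp only [he, smul_eq_mul, Complex.real_smul, sub_zero, mul_comm]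
  push_cast
  ring

theorem norm_coeff_convolution_eq {f g : ℝ → ℝ} (hf : Continuous f) (hg : Continuous g)
    (hg_per : ∀ x, g (x + 2 * π) = g x) (n : ℤ) :
    ‖1 / (2 * (π : ℂ)) * ∫ t in (0 : ℝ)..2 * π,
        ((∫ x in (0 : ℝ)..2 * π, f x * g (t - x) : ℝ) : ℂ) * Complex.exp (-(Complex.I * n * t))‖ =
      2 * π * (‖fourierCoeffOn two_pi_pos (fun x => (f x : ℂ)) n‖ *
        ‖fourierCoeffOn two_pi_pos (fun x => (g x : ℂ)) n‖) := by
  have hconv := fourierCoeffOn_convolution two_pi_pos (f := fun x => (f x : ℂ))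
    (g := fun x => (g x : ℂ)) (by fun_prop) (by fun_prop) (fun x => by simp [hg_per]) n
  simp only [← intervalIntegral.integral_ofReal, Complex.ofReal_mul,
    ← fourierCoeffOn_two_pi_pos_eq, hconv, norm_mul]
  rw [← Complex.ofReal_mul, ← Complex.ofReal_sub, Complex.norm_real, sub_zero,
    Real.norm_of_nonneg two_pi_pos.le, mul_assoc]

theorem two_pi_div_two_pow_rpow (k : ℕ) (γ : ℝ) :
    (2 * π / 2 ^ (k + 2)) ^ γ = (π / 2) ^ γ * (2 : ℝ) ^ (-((k : ℝ) * γ)) := by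
  rw [show 2 * π / 2 ^ (k + 2) = π / 2 * ((2 : ℝ) ^ k)⁻¹ by rw [pow_add]; field_simp,
    Real.mul_rpow (by positivity) (by positivity), Real.inv_rpow (by positivity),
    ← Real.rpow_natCast_mul (by norm_num), Real.rpow_neg (by norm_num)]

theorem stmt_4_general (α β : ℝ) :
    ∃ C : ℝ, 0 < C ∧
      ∀ (f g : ℝ → ℝ) (Cf Cg : ℝ), 0 ≤ Cf → 0 ≤ Cg →
        Continuous f → Continuous g →
        (∀ x, f (x + 2 * Real.pi) = f x) →
        (∀ x, g (x + 2 * Real.pi) = g x) →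
        (∀ x y, |f x - f y| ≤ Cf * |x - y| ^ α) →
        (∀ x y, |g x - g y| ≤ Cg * |x - y| ^ β) →
        ∀ k : ℕ,
          ∑ n ∈ (Finset.Icc (-(2 ^ (k + 1) : ℤ)) (2 ^ (k + 1))).filter
              (fun n => (2 : ℤ) ^ k ≤ |n|),
            ‖(1 / (2 * (Real.pi : ℂ))) *
                ∫ t in (0:ℝ)..(2 * Real.pi),
                  ((∫ x in (0:ℝ)..(2 * Real.pi), f x * g (t - x) : ℝ) : ℂ) *
                    Complex.exp (-(Complex.I * (n : ℂ) * (t : ℂ)))‖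
            ≤ C * Cf * Cg * (2 : ℝ) ^ (-((k : ℝ) * (α + β))) := by
  refine ⟨π * (π / 2) ^ (α + β), by positivity, ?_⟩
  intro f g Cf Cg hCf hCg hf hg hf_per hg_per hf_holder hg_holder k
  have hblock := sum_norm_mul_fourierCoeffOn_dyadicBlock_le_of_holder two_pi_pos
    (u := fun x => (f x : ℂ)) (v := fun x => (g x : ℂ)) (by fun_prop) (by fun_prop)
    (fun x => by simp [hf_per]) (fun x => by simp [hg_per]) hCf hCg
    (fun x y => by simpa [← Complex.ofReal_sub] using hf_holder x y)
    (fun x y => by simpa [← Complex.ofReal_sub] using hg_holder x y) k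
  rw [sub_zero] at hblock
  rw [Finset.sum_congr rfl fun n _ => norm_coeff_convolution_eq hf hg hg_per n,
    ← Finset.mul_sum]
  calc _ ≤ 2 * π * (Cf * Cg * (2 * π / 2 ^ (k + 2)) ^ (α + β) / 2) := by gcongr; exact hblock
    _ = _ := by rw [two_pi_div_two_pow_rpow]; ring

/-- Dyadic block estimate for the Fourier coefficients of the circle convolution
`h` of an `α`-Hölder function `f` and a `β`-Hölder function `g`:
`∑_{2^k ≤ |n| ≤ 2^{k+1}} |ĥ(n)| ≤ C · C_f · C_g · 2^(−k(α+β))`. -/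
theorem stmt_4 (α β : ℝ) (hα : α ∈ Set.Ioo (0:ℝ) 1) (hβ : β ∈ Set.Ioo (0:ℝ) 1) :
    ∃ C : ℝ, 0 < C ∧
      ∀ (f g : ℝ → ℝ) (Cf Cg : ℝ), 0 ≤ Cf → 0 ≤ Cg →
        Continuous f → Continuous g →
        (∀ x, f (x + 2 * Real.pi) = f x) →
        (∀ x, g (x + 2 * Real.pi) = g x) →
        (∀ x y, |f x - f y| ≤ Cf * |x - y| ^ α) →
        (∀ x y, |g x - g y| ≤ Cg * |x - y| ^ β) →
        ∀ k : ℕ,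
          ∑ n ∈ (Finset.Icc (-(2 ^ (k + 1) : ℤ)) (2 ^ (k + 1))).filter
              (fun n => (2 : ℤ) ^ k ≤ |n|),
            ‖(1 / (2 * (Real.pi : ℂ))) *
                ∫ t in (0:ℝ)..(2 * Real.pi),
                  ((∫ x in (0:ℝ)..(2 * Real.pi), f x * g (t - x) : ℝ) : ℂ) *
                    Complex.exp (-(Complex.I * (n : ℂ) * (t : ℂ)))‖
            ≤ C * Cf * Cg * (2 : ℝ) ^ (-((k : ℝ) * (α + β))) :=
  stmt_4_general α β
end

section
/- With the eigenvalue-perturbation setup, assume moreover that B, η and v are twice differentiable at 0, and set 𝔜 = B″(0) − (B′(0))². Then the second logarithmic derivative of the eigenvalue at 0 satisfies η″(0)/η₀ − (η′(0)/η₀)² = v*(𝔜·v₀) + v*(𝔛·(𝔛·v₀)) − (v*(𝔛·v₀))² + (2/η₀)·v*(𝔛·(A·v′(0))). -/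
/-!
Since `v* (v t) = 1`, applying `v*` to the eigen-equation gives `η t = v* (B t (A (v t)))`, and
differentiating `v* (v t) = 1` gives `v* (v′ t) = 0` near `0`, hence also `v* (v″ 0) = 0`.
Differentiating the formula for `η` twice and using `v* ∘ A = η₀ v*`, `A v₀ = η₀ v₀` yields
`η′ 0 = η₀ v*(𝔛 v₀)` and `η″ 0 = η₀ v*(B″ v₀) + 2 v*(𝔛 (A v′ 0))`; the identity is then algebra.
-/

open Filter Topology

section

variable {E F G : Type*} [NormedAddCommGroup E] [NormedSpace ℝ E] [NormedAddCommGroup F]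
  [NormedSpace ℝ F] [NormedAddCommGroup G] [NormedSpace ℝ G]

theorem HasDerivAt.clm_eq_zero_of_eventually_const {v : ℝ → E} {v' : E} {t : ℝ} {c : F}
    (L : E →L[ℝ] F) (hv : HasDerivAt v v' t) (hc : ∀ᶠ s in 𝓝 t, L (v s) = c) : L v' = 0 :=
  (L.hasFDerivAt.comp_hasDerivAt t hv).unique
    ((hasDerivAt_const t c).congr_of_eventuallyEq hc)

theorem HasDerivAt.clm_apply_clm_apply {B : ℝ → E →L[ℝ] F} {B' : E →L[ℝ] F} {w : ℝ → E}
    {w' : E} {t : ℝ} (L : F →L[ℝ] G) (hB : HasDerivAt B B' t) (hw : HasDerivAt w w' t) :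
    HasDerivAt (fun s => L (B s (w s))) (L (B' (w t)) + L (B t w')) t :=
  map_add L _ _ ▸ L.hasFDerivAt.comp_hasDerivAt t (hB.clm_apply hw)

end

theorem stmt_9_general {d : ℕ}
    (A : (Fin d → ℝ) →L[ℝ] (Fin d → ℝ))
    (η₀ : ℝ) (hη₀ : η₀ ≠ 0) (v₀ : Fin d → ℝ)
    (vstar : (Fin d → ℝ) →L[ℝ] ℝ)
    (hvA : ∀ w, vstar (A w) = η₀ * vstar w)
    (B B' : ℝ → ((Fin d → ℝ) →L[ℝ] (Fin d → ℝ)))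
    (B'' : (Fin d → ℝ) →L[ℝ] (Fin d → ℝ))
    (η ηd : ℝ → ℝ) (ηdd : ℝ)
    (v vd : ℝ → Fin d → ℝ) (vdd : Fin d → ℝ)
    (hB0 : B 0 = ContinuousLinearMap.id ℝ (Fin d → ℝ))
    (hη0 : η 0 = η₀) (hv0 : v 0 = v₀)
    (hB' : ∀ᶠ t in nhds (0:ℝ), HasDerivAt B (B' t) t) (hB'' : HasDerivAt B' B'' 0)
    (hηd : ∀ᶠ t in nhds (0:ℝ), HasDerivAt η (ηd t) t) (hηdd : HasDerivAt ηd ηdd 0)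
    (hvd : ∀ᶠ t in nhds (0:ℝ), HasDerivAt v (vd t) t) (hvdd : HasDerivAt vd vdd 0)
    (heig : ∀ t, B t (A (v t)) = η t • v t)
    (hvt : ∀ t, vstar (v t) = 1) :
    ηdd / η₀ - (ηd 0 / η₀) ^ 2 =
      vstar ((B'' - (B' 0).comp (B' 0)) v₀) + vstar (B' 0 (B' 0 v₀))
        - vstar (B' 0 v₀) ^ 2 + (2 / η₀) * vstar (B' 0 (A (vd 0))) := by
  have hη : η = fun t => vstar (B t (A (v t))) := funext fun t => by simp [heig, hvt]
  have hAv₀ : A v₀ = η₀ • v₀ := by simpa [hB0, hη0, hv0] using heig 0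
  have hηd_eq : ∀ᶠ t in 𝓝 0, ηd t = vstar (B' t (A (v t))) + vstar (B t (A (vd t))) := by
    filter_upwards [hB', hηd, hvd] with t hBt hηt hvt'
    exact hηt.unique (hη ▸ hBt.clm_apply_clm_apply vstar (A.hasFDerivAt.comp_hasDerivAt t hvt'))
  have hvd_ker : ∀ᶠ t in 𝓝 0, vstar (vd t) = 0 := hvd.mono fun t ht =>
    ht.clm_eq_zero_of_eventually_const vstar (.of_forall hvt)
  have hvdd_ker : vstar vdd = 0 := hvdd.clm_eq_zero_of_eventually_const vstar hvd_ker
  have hηd0 : ηd 0 = η₀ * vstar (B' 0 v₀) := by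
    simp [hηd_eq.self_of_nhds, hv0, hB0, hAv₀, hvA, hvd_ker.self_of_nhds]
  have hηdd_eq : ηdd = η₀ * vstar (B'' v₀) + 2 * vstar (B' 0 (A (vd 0))) := by
    have h₁ := hB''.clm_apply_clm_apply vstar (A.hasFDerivAt.comp_hasDerivAt 0 hvd.self_of_nhds)
    have h₂ := hB'.self_of_nhds.clm_apply_clm_apply vstar (A.hasFDerivAt.comp_hasDerivAt 0 hvdd)
    rw [hηdd.unique ((h₁.add h₂).congr_of_eventuallyEq hηd_eq)]
    simp only [Function.comp_apply, hv0, hAv₀, map_smul, smul_eq_mul, hB0,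
      ContinuousLinearMap.id_apply, hvA, hvdd_ker, mul_zero, add_zero]
    ring
  rw [hηdd_eq, hηd0]
  simp only [sub_apply, ContinuousLinearMap.comp_apply, map_sub]
  field_simp
  ring

/-- Eigenvalue perturbation: second logarithmic derivative of the eigenvalue.
With `𝔛 = B′(0)` and `𝔜 = B″(0) − (B′(0))²`,
`η″(0)/η₀ − (η′(0)/η₀)² = v*(𝔜v₀) + v*(𝔛𝔛v₀) − (v*(𝔛v₀))² + (2/η₀)·v*(𝔛(A·v′(0)))`. -/
theorem stmt_9 {d : ℕ} (hd : 1 ≤ d)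
    (A : (Fin d → ℝ) →L[ℝ] (Fin d → ℝ))
    (η₀ : ℝ) (hη₀ : η₀ ≠ 0) (v₀ : Fin d → ℝ)
    (vstar : (Fin d → ℝ) →L[ℝ] ℝ)
    (hvA : ∀ w, vstar (A w) = η₀ * vstar w) (hv₀ : vstar v₀ = 1)
    (B B' : ℝ → ((Fin d → ℝ) →L[ℝ] (Fin d → ℝ)))
    (B'' : (Fin d → ℝ) →L[ℝ] (Fin d → ℝ))
    (η ηd : ℝ → ℝ) (ηdd : ℝ)
    (v vd : ℝ → Fin d → ℝ) (vdd : Fin d → ℝ)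
    (hB0 : B 0 = ContinuousLinearMap.id ℝ (Fin d → ℝ))
    (hη0 : η 0 = η₀) (hv0 : v 0 = v₀)
    (hB' : ∀ᶠ t in nhds (0:ℝ), HasDerivAt B (B' t) t) (hB'' : HasDerivAt B' B'' 0)
    (hηd : ∀ᶠ t in nhds (0:ℝ), HasDerivAt η (ηd t) t) (hηdd : HasDerivAt ηd ηdd 0)
    (hvd : ∀ᶠ t in nhds (0:ℝ), HasDerivAt v (vd t) t) (hvdd : HasDerivAt vd vdd 0)
    (heig : ∀ t, B t (A (v t)) = η t • v t)
    (hvt : ∀ t, vstar (v t) = 1) :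
    ηdd / η₀ - (ηd 0 / η₀) ^ 2 =
      vstar ((B'' - (B' 0).comp (B' 0)) v₀) + vstar (B' 0 (B' 0 v₀))
        - vstar (B' 0 v₀) ^ 2 + (2 / η₀) * vstar (B' 0 (A (vd 0))) :=
  stmt_9_general A η₀ hη₀ v₀ vstar hvA B B' B'' η ηd ηdd v vd vdd hB0 hη0 hv0 hB' hB'' hηd hηdd hvd
    hvdd heig hvt
end

section
/- With the eigenvalue-perturbation setup, assume B, η and v are twice differentiable at 0 and set 𝔜 = B″(0) − (B′(0))². Suppose in addition there are w ∈ ℝ^d and ν ∈ ℝ with ν ≠ η₀ such that A·w = ν·w, v*(w) = 0, 𝔜 = 0, 𝔛·v₀ = w, 𝔛·w = −v₀, and v′(0) = (η₀/(η₀ − ν))·w. Then η″(0)/η₀ − (η′(0)/η₀)² = (η₀ + ν)/(ν − η₀); in particular, if ν ≠ −η₀ this second logarithmic derivative is nonzero. -/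
/-!
Differentiating `B t (A (v t)) = η t • v t` once and twice at `0` and applying the left
eigenvector `v*` (which turns `A` into multiplication by `η₀` and kills `v'` by the
normalization `v* (v t) = 1`) gives `η'(0) = η₀ v*(𝔛 v₀)` and
`η''(0) = η₀ v*(B''(0) v₀) + 2 v*(𝔛 A v'(0))`. For the rotation `𝔛 v₀ = w`, `𝔛 w = -v₀`
this yields `η'(0) = 0` and `η''(0) = -η₀ - 2 η₀ ν / (η₀ - ν) = η₀ (η₀ + ν) / (ν - η₀)`.
-/

open Filter Topology

section EigenPerturbation

variable {𝕜 E : Type*} [NontriviallyNormedField 𝕜] [NormedAddCommGroup E] [NormedSpace 𝕜 E]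
  {A : E →L[𝕜] E} {B B' : 𝕜 → E →L[𝕜] E} {B'' : E →L[𝕜] E}
  {η ηd : 𝕜 → 𝕜} {ηdd : 𝕜} {v vd : 𝕜 → E} {vdd : E} {vstar : E →L[𝕜] 𝕜}

theorem eigen_hasDerivAt_eq {t : 𝕜} (hB : HasDerivAt B (B' t) t) (hη : HasDerivAt η (ηd t) t)
    (hv : HasDerivAt v (vd t) t) (heig : ∀ s, B s (A (v s)) = η s • v s) :
    B' t (A (v t)) + B t (A (vd t)) = η t • vd t + ηd t • v t := by
  have hL : HasDerivAt (fun s => B s (A (v s))) (B' t (A (v t)) + B t (A (vd t))) t :=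
    hB.clm_apply (A.hasFDerivAt.comp_hasDerivAt t hv)
  rw [show (fun s => B s (A (v s))) = fun s => η s • v s from funext heig] at hL
  exact hL.unique (hη.smul hv)

theorem eigen_hasDerivAt_two_eq {t : 𝕜} (hB : ∀ᶠ s in 𝓝 t, HasDerivAt B (B' s) s)
    (hB' : HasDerivAt B' B'' t) (hη : ∀ᶠ s in 𝓝 t, HasDerivAt η (ηd s) s)
    (hη' : HasDerivAt ηd ηdd t) (hv : ∀ᶠ s in 𝓝 t, HasDerivAt v (vd s) s)
    (hv' : HasDerivAt vd vdd t) (heig : ∀ s, B s (A (v s)) = η s • v s) :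
    B'' (A (v t)) + (2 : 𝕜) • B' t (A (vd t)) + B t (A vdd) =
      η t • vdd + (2 : 𝕜) • ηd t • vd t + ηdd • v t := by
  have hfirst : (fun s => B' s (A (v s)) + B s (A (vd s))) =ᶠ[𝓝 t]
      fun s => η s • vd s + ηd s • v s := by
    filter_upwards [hB, hη, hv] with s hBs hηs hvs using eigen_hasDerivAt_eq hBs hηs hvs heig
  have hL : HasDerivAt (fun s => B' s (A (v s)) + B s (A (vd s)))
      (B'' (A (v t)) + B' t (A (vd t)) + (B' t (A (vd t)) + B t (A vdd))) t :=
    (hB'.clm_apply (A.hasFDerivAt.comp_hasDerivAt t hv.self_of_nhds)).add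
      (hB.self_of_nhds.clm_apply (A.hasFDerivAt.comp_hasDerivAt t hv'))
  have hR := ((hη.self_of_nhds.smul hv').add (hη'.smul hv.self_of_nhds)).congr_of_eventuallyEq
    hfirst
  rw [two_smul, two_smul]
  convert hL.unique hR using 1 <;> abel

theorem map_hasDerivAt_eq_zero {t c : 𝕜} (hv : HasDerivAt v (vd t) t)
    (hvt : ∀ s, vstar (v s) = c) : vstar (vd t) = 0 := by
  have h := vstar.hasFDerivAt.comp_hasDerivAt t hv
  rw [show vstar ∘ v = fun _ => c from funext hvt] at h
  exact h.unique (hasDerivAt_const t c)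

theorem eigenvalue_hasDerivAt_eq (hB0 : B 0 = ContinuousLinearMap.id 𝕜 E)
    (hvA : ∀ x, vstar (A x) = η 0 * vstar x) (heig : ∀ s, B s (A (v s)) = η s • v s)
    (hvt : ∀ s, vstar (v s) = 1) (hB : HasDerivAt B (B' 0) 0) (hη : HasDerivAt η (ηd 0) 0)
    (hv : HasDerivAt v (vd 0) 0) :
    ηd 0 = η 0 * vstar (B' 0 (v 0)) := by
  have hAv : A (v 0) = η 0 • v 0 := by simpa [hB0] using heig 0
  have h := congrArg vstar (eigen_hasDerivAt_eq hB hη hv heig)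
  rw [hB0, hAv] at h
  simp only [map_add, map_smul, ContinuousLinearMap.id_apply, hvA, hvt, smul_eq_mul,
    mul_one] at h
  linear_combination -h

theorem eigenvalue_hasDerivAt_two_eq (hB0 : B 0 = ContinuousLinearMap.id 𝕜 E)
    (hvA : ∀ x, vstar (A x) = η 0 * vstar x) (heig : ∀ s, B s (A (v s)) = η s • v s)
    (hvt : ∀ s, vstar (v s) = 1) (hB : ∀ᶠ s in 𝓝 0, HasDerivAt B (B' s) s)
    (hB' : HasDerivAt B' B'' 0) (hη : ∀ᶠ s in 𝓝 0, HasDerivAt η (ηd s) s)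
    (hη' : HasDerivAt ηd ηdd 0) (hv : ∀ᶠ s in 𝓝 0, HasDerivAt v (vd s) s)
    (hv' : HasDerivAt vd vdd 0) :
    ηdd = η 0 * vstar (B'' (v 0)) + 2 * vstar (B' 0 (A (vd 0))) := by
  have hAv : A (v 0) = η 0 • v 0 := by simpa [hB0] using heig 0
  have hvd : vstar (vd 0) = 0 := map_hasDerivAt_eq_zero hv.self_of_nhds hvt
  have h := congrArg vstar (eigen_hasDerivAt_two_eq hB hB' hη hη' hv hv' heig)
  rw [hB0, hAv] at h
  simp only [map_add, map_smul, ContinuousLinearMap.id_apply, hvA, hvt, hvd, smul_eq_mul,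
    mul_one, mul_zero] at h
  linear_combination -h

end EigenPerturbation

theorem stmt_10_general {d : ℕ}
    (A : (Fin d → ℝ) →L[ℝ] (Fin d → ℝ))
    (η₀ : ℝ) (hη₀ : η₀ ≠ 0) (v₀ : Fin d → ℝ)
    (vstar : (Fin d → ℝ) →L[ℝ] ℝ)
    (hvA : ∀ w, vstar (A w) = η₀ * vstar w) (hv₀ : vstar v₀ = 1)
    (B B' : ℝ → ((Fin d → ℝ) →L[ℝ] (Fin d → ℝ)))
    (B'' : (Fin d → ℝ) →L[ℝ] (Fin d → ℝ))
    (η ηd : ℝ → ℝ) (ηdd : ℝ)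
    (v vd : ℝ → Fin d → ℝ) (vdd : Fin d → ℝ)
    (hB0 : B 0 = ContinuousLinearMap.id ℝ (Fin d → ℝ))
    (hη0 : η 0 = η₀) (hv0 : v 0 = v₀)
    (hB' : ∀ᶠ t in nhds (0:ℝ), HasDerivAt B (B' t) t) (hB'' : HasDerivAt B' B'' 0)
    (hηd : ∀ᶠ t in nhds (0:ℝ), HasDerivAt η (ηd t) t) (hηdd : HasDerivAt ηd ηdd 0)
    (hvd : ∀ᶠ t in nhds (0:ℝ), HasDerivAt v (vd t) t) (hvdd : HasDerivAt vd vdd 0)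
    (heig : ∀ t, B t (A (v t)) = η t • v t)
    (hvt : ∀ t, vstar (v t) = 1)
    (w : Fin d → ℝ) (ν : ℝ) (hν : ν ≠ η₀)
    (hw : A w = ν • w) (hwv : vstar w = 0)
    (h𝔜 : B'' = (B' 0).comp (B' 0))
    (h𝔛v : B' 0 v₀ = w) (h𝔛w : B' 0 w = -v₀)
    (hvd0 : vd 0 = (η₀ / (η₀ - ν)) • w) :
    ηdd / η₀ - (ηd 0 / η₀) ^ 2 = (η₀ + ν) / (ν - η₀) ∧
      (ν ≠ -η₀ → ηdd / η₀ - (ηd 0 / η₀) ^ 2 ≠ 0) := by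
  have hvA' : ∀ x, vstar (A x) = η 0 * vstar x := fun x => by rw [hη0, hvA]
  have hηd0 : ηd 0 = 0 := by
    rw [eigenvalue_hasDerivAt_eq hB0 hvA' heig hvt hB'.self_of_nhds hηd.self_of_nhds
      hvd.self_of_nhds, hv0, h𝔛v, hwv, mul_zero]
  have hηdd0 : ηdd = -η₀ - 2 * (η₀ / (η₀ - ν) * ν) := by
    rw [eigenvalue_hasDerivAt_two_eq hB0 hvA' heig hvt hB' hB'' hηd hηdd hvd hvdd, hη0, hv0,
      hvd0, h𝔜, ContinuousLinearMap.comp_apply, h𝔛v]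
    simp only [map_smul, hw, h𝔛w, map_neg, hv₀, smul_eq_mul]
    ring
  have hνη : ν - η₀ ≠ 0 := sub_ne_zero.mpr hν
  have hlog : ηdd / η₀ - (ηd 0 / η₀) ^ 2 = (η₀ + ν) / (ν - η₀) := by
    have hην : η₀ - ν ≠ 0 := sub_ne_zero.mpr hν.symm
    rw [hηdd0, hηd0]
    field_simp
    ring
  refine ⟨hlog, fun hν' => ?_⟩
  rw [hlog]
  exact div_ne_zero (fun h => hν' (by linarith)) hνη

/-- Eigenvalue perturbation: with a rotation-type perturbation mixing the
eigenvector `v₀` with another eigenvector `w` (eigenvalue `ν ≠ η₀`), the second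
logarithmic derivative equals `(η₀ + ν)/(ν − η₀)`; in particular it is nonzero
when `ν ≠ −η₀`. -/
theorem stmt_10 {d : ℕ} (hd : 1 ≤ d)
    (A : (Fin d → ℝ) →L[ℝ] (Fin d → ℝ))
    (η₀ : ℝ) (hη₀ : η₀ ≠ 0) (v₀ : Fin d → ℝ)
    (vstar : (Fin d → ℝ) →L[ℝ] ℝ)
    (hvA : ∀ w, vstar (A w) = η₀ * vstar w) (hv₀ : vstar v₀ = 1)
    (B B' : ℝ → ((Fin d → ℝ) →L[ℝ] (Fin d → ℝ)))
    (B'' : (Fin d → ℝ) →L[ℝ] (Fin d → ℝ))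
    (η ηd : ℝ → ℝ) (ηdd : ℝ)
    (v vd : ℝ → Fin d → ℝ) (vdd : Fin d → ℝ)
    (hB0 : B 0 = ContinuousLinearMap.id ℝ (Fin d → ℝ))
    (hη0 : η 0 = η₀) (hv0 : v 0 = v₀)
    (hB' : ∀ᶠ t in nhds (0:ℝ), HasDerivAt B (B' t) t) (hB'' : HasDerivAt B' B'' 0)
    (hηd : ∀ᶠ t in nhds (0:ℝ), HasDerivAt η (ηd t) t) (hηdd : HasDerivAt ηd ηdd 0)
    (hvd : ∀ᶠ t in nhds (0:ℝ), HasDerivAt v (vd t) t) (hvdd : HasDerivAt vd vdd 0)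
    (heig : ∀ t, B t (A (v t)) = η t • v t)
    (hvt : ∀ t, vstar (v t) = 1)
    (w : Fin d → ℝ) (ν : ℝ) (hν : ν ≠ η₀)
    (hw : A w = ν • w) (hwv : vstar w = 0)
    (h𝔜 : B'' = (B' 0).comp (B' 0))
    (h𝔛v : B' 0 v₀ = w) (h𝔛w : B' 0 w = -v₀)
    (hvd0 : vd 0 = (η₀ / (η₀ - ν)) • w) :
    ηdd / η₀ - (ηd 0 / η₀) ^ 2 = (η₀ + ν) / (ν - η₀) ∧
      (ν ≠ -η₀ → ηdd / η₀ - (ηd 0 / η₀) ^ 2 ≠ 0) :=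
  stmt_10_general A η₀ hη₀ v₀ vstar hvA hv₀ B B' B'' η ηd ηdd v vd vdd hB0 hη0 hv0 hB' hB'' hηd hηdd
    hvd hvdd heig hvt w ν hν hw hwv h𝔜 h𝔛v h𝔛w hvd0
end

section
/- Let h : ℝ × ℝ^d → ℝ^d be a map of class C² (jointly in both variables) with h(0, p) = p for all p, and suppose that for every (t, p) the partial derivative in the space variable D_p h(t, p) is an invertible linear map. Define X(p) = ∂_t h(t, p)|_{t=0}, Z(p) = ∂²_t h(t, p)|_{t=0}, and the time-dependent vector fields X_t(p) = (D_p h(t, p))⁻¹ (∂_t h(t, p)). Then for every p, the map t ↦ X_t(p) is differentiable at t = 0 and ∂_t X_t(p)|_{t=0} = Z(p) − DX(p)(X(p)), where DX(p) denotes the derivative of the vector field X at p. -/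
/-!
Write `A t = D_p h(t, p)` and `v t = ∂_t h(t, p)`, so that `X_t(p) = (A t)⁻¹ (v t)` with `A 0 = id`.
Differentiating the inverse gives `∂_t X_t(p)|₀ = v'(0) - A'(0) (v 0) = Z(p) - A'(0) X(p)`, and
`A'(0) = ∂_t D_p h = D_p ∂_t h = DX(p)` by the symmetry of the second derivative of the `C²` map `h`.
-/

open ContinuousLinearMap

lemma ContinuousLinearMap.ringInverse_eq_of_comp_eq_id {𝕜 E : Type*} [NontriviallyNormedField 𝕜]
    [NormedAddCommGroup E] [NormedSpace 𝕜 E] {L B : E →L[𝕜] E}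
    (hBL : B.comp L = ContinuousLinearMap.id 𝕜 E) (hLB : L.comp B = ContinuousLinearMap.id 𝕜 E) :
    Ring.inverse L = B :=
  Ring.inverse_unit ⟨L, B, hLB, hBL⟩

lemma HasDerivAt.ringInverse_clm_apply {𝕜 E : Type*} [NontriviallyNormedField 𝕜]
    [NormedAddCommGroup E] [NormedSpace 𝕜 E] [CompleteSpace E] {A : 𝕜 → E →L[𝕜] E}
    {A' : E →L[𝕜] E} {v : 𝕜 → E} {v' : E} {t : 𝕜} (u : (E →L[𝕜] E)ˣ)
    (hA : HasDerivAt A A' t) (hAt : A t = u) (hv : HasDerivAt v v' t) :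
    HasDerivAt (fun s => Ring.inverse (A s) (v s))
      ((↑u⁻¹ : E →L[𝕜] E) (v' - A' ((↑u⁻¹ : E →L[𝕜] E) (v t)))) t := by
  have hinv : HasDerivAt (fun s => Ring.inverse (A s)) (-(↑u⁻¹ * A' * ↑u⁻¹)) t := by
    have := (hAt ▸ hasFDerivAt_ringInverse (𝕜 := 𝕜) u).comp_hasDerivAt t hA
    simpa [Function.comp_def] using this
  convert hinv.clm_apply hv using 1
  rw [hAt, Ring.inverse_unit, map_sub, sub_eq_neg_add]
  rfl

section PartialDerivatives

variable {𝕜 E F : Type*} [NontriviallyNormedField 𝕜] [NormedAddCommGroup E] [NormedSpace 𝕜 E]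
  [NormedAddCommGroup F] [NormedSpace 𝕜 F] {h : 𝕜 × E → F} {t : 𝕜} {q : E}

lemma DifferentiableAt.hasDerivAt_fst_slice (hh : DifferentiableAt 𝕜 h (t, q)) :
    HasDerivAt (fun s => h (s, q)) (fderiv 𝕜 h (t, q) (1, 0)) t :=
  hh.hasFDerivAt.comp_hasDerivAt t ((hasDerivAt_id t).prodMk (hasDerivAt_const t q))

lemma DifferentiableAt.hasFDerivAt_snd_slice (hh : DifferentiableAt 𝕜 h (t, q)) :
    HasFDerivAt (fun x => h (t, x)) ((fderiv 𝕜 h (t, q)).comp (inr 𝕜 𝕜 E)) q :=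
  hh.hasFDerivAt.comp q (hasFDerivAt_prodMk_right t q)

lemma Differentiable.deriv_fst_slice_eq (hh : Differentiable 𝕜 h) (t : 𝕜) (q : E) :
    _root_.deriv (fun s => h (s, q)) t = fderiv 𝕜 h (t, q) (1, 0) :=
  (hh (t, q)).hasDerivAt_fst_slice.deriv

end PartialDerivatives

section MixedPartials

variable {𝕜 E F : Type*} [RCLike 𝕜] [NormedAddCommGroup E] [NormedSpace 𝕜 E]
  [NormedAddCommGroup F] [NormedSpace 𝕜 F] {h : 𝕜 × E → F}

lemma ContDiff.differentiable_fderiv_of_two (hh : ContDiff 𝕜 2 h) : Differentiable 𝕜 (fderiv 𝕜 h) :=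
  (hh.fderiv_right (m := 1) le_rfl).differentiable one_ne_zero

lemma ContDiff.differentiable_deriv_fst_slice (hh : ContDiff 𝕜 2 h) (q : E) :
    Differentiable 𝕜 (fun t => deriv (fun s => h (s, q)) t) := by
  simp only [(hh.differentiable (by norm_num)).deriv_fst_slice_eq]
  have := hh.differentiable_fderiv_of_two
  fun_prop

lemma ContDiff.hasDerivAt_fderiv_snd_slice (hh : ContDiff 𝕜 2 h) (t : 𝕜) (p : E) :
    HasDerivAt (fun s => fderiv 𝕜 (fun q => h (s, q)) p)
      (fderiv 𝕜 (fun q => deriv (fun s => h (s, q)) t) p) t := by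
  have hd : Differentiable 𝕜 h := hh.differentiable (by norm_num)
  have hd' := hh.differentiable_fderiv_of_two
  have hslice : (fun s => fderiv 𝕜 (fun q => h (s, q)) p) =
      fun s => (fderiv 𝕜 h (s, p)).comp (inr 𝕜 𝕜 E) :=
    funext fun s => (hd (s, p)).hasFDerivAt_snd_slice.fderiv
  have hdt : HasDerivAt (fun s => (fderiv 𝕜 h (s, p)).comp (inr 𝕜 𝕜 E))
      ((fderiv 𝕜 (fderiv 𝕜 h) (t, p) (1, 0)).comp (inr 𝕜 𝕜 E)) t := by
    simpa using (hd' (t, p)).hasDerivAt_fst_slice.clm_comp (hasDerivAt_const t (inr 𝕜 𝕜 E))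
  have hdq : HasFDerivAt (fun q => fderiv 𝕜 h (t, q) (1, 0))
      (((fderiv 𝕜 (fderiv 𝕜 h) (t, p)).comp (inr 𝕜 𝕜 E)).flip (1, 0)) p := by
    simpa using
      (hd' (t, p)).hasFDerivAt_snd_slice.clm_apply (hasFDerivAt_const ((1 : 𝕜), (0 : E)) p)
  simp only [hslice, hd.deriv_fst_slice_eq, hdq.fderiv]
  convert hdt using 1
  ext w
  -- both sides are `D²h(t, p)` evaluated at `(1, 0)` and `(0, w)`, in opposite orders
  exact (hh.contDiffAt.isSymmSndFDerivAt (by simp) _ _).symm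

end MixedPartials

/-- For a `C²` family of diffeomorphisms `h_t` of `ℝ^d` with `h₀ = id`, the
time-dependent vector field `X_t(p) = (D_p h_t(p))⁻¹ (∂_t h_t(p))` is
differentiable in `t` at `t = 0`, with derivative `Y = Z − DX·X`, where
`X(p) = ∂_t h_t(p)|₀` and `Z(p) = ∂²_t h_t(p)|₀`. -/
theorem stmt_12 {d : ℕ}
    (h : ℝ × (Fin d → ℝ) → Fin d → ℝ) (hC2 : ContDiff ℝ 2 h)
    (h0 : ∀ p, h (0, p) = p)
    (Dinv : ℝ → (Fin d → ℝ) → ((Fin d → ℝ) →L[ℝ] (Fin d → ℝ)))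
    (hDinv : ∀ t p,
      (Dinv t p).comp (fderiv ℝ (fun q => h (t, q)) p) =
        ContinuousLinearMap.id ℝ (Fin d → ℝ) ∧
      (fderiv ℝ (fun q => h (t, q)) p).comp (Dinv t p) =
        ContinuousLinearMap.id ℝ (Fin d → ℝ)) :
    ∀ p, HasDerivAt (fun t => Dinv t p (deriv (fun τ => h (τ, p)) t))
      (deriv (fun t => deriv (fun τ => h (τ, p)) t) 0 -
        fderiv ℝ (fun q => deriv (fun t => h (t, q)) 0) p
          (deriv (fun t => h (t, p)) 0)) 0 := by
  intro p
  have hDinv_eq : ∀ t, Dinv t p = Ring.inverse (fderiv ℝ (fun q => h (t, q)) p) := fun t =>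
    (ringInverse_eq_of_comp_eq_id (hDinv t p).1 (hDinv t p).2).symm
  have hD0 : fderiv ℝ (fun q => h (0, q)) p = ((1 : ((Fin d → ℝ) →L[ℝ] (Fin d → ℝ))ˣ) : _) := by
    simp only [h0, fderiv_fun_id, Units.val_one, one_def]
  have hZ := (hC2.differentiable_deriv_fst_slice p 0).hasDerivAt
  simp only [hDinv_eq]
  simpa using (hC2.hasDerivAt_fderiv_snd_slice 0 p).ringInverse_clm_apply 1 hD0 hZ
end

section
/- Let μ be a finite Borel measure on ℝ^d and let h : ℝ × ℝ^d → ℝ^d be of class C² (jointly) with h(0, p) = p for all p, such that: D_p h(t, p) is invertible for every (t, p); there is a compact set K ⊆ ℝ^d with h(t, p) = p for every t and every p ∉ K; and for every t the map h_t = h(t, ·) preserves μ (the pushforward of μ under h_t equals μ). Define X_t(p) = (D_p h(t, p))⁻¹ (∂_t h(t, p)). Then for every continuously differentiable function g : ℝ^d → ℝ and every t ∈ ℝ: ∫ D(g ∘ h_t)(p)(X_t(p)) dμ(p) = 0, i.e., the integral of the Lie derivative of g ∘ h_t along X_t vanishes. -/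
/-!
By the chain rule and `D_p h_t (X_t) = ∂_t h_t`, the integrand is `∂_t (g ∘ h)(t, p)`. Measure
preservation makes `τ ↦ ∫ g ∘ h_τ dμ = ∫ g dμ` constant, and differentiating under the integral
sign (legitimate because `h_τ = id` off the compact set `K`, so `∂_τ (g ∘ h)` vanishes there and is
bounded on `K`) shows that the integral of `∂_t (g ∘ h)` is zero. Since `g` need not be
integrable, it is first replaced by a compactly supported `C¹` function agreeing with it near
`h_t(K)`, which does not change the integrand.
-/

open MeasureTheory Metric Set

section Calculus

variable {E F : Type*} [NormedAddCommGroup E] [NormedSpace ℝ E]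
  [NormedAddCommGroup F] [NormedSpace ℝ F]

theorem ContDiff.hasDerivAt_fst_slice {Φ : ℝ × E → F} (hΦ : ContDiff ℝ 1 Φ) (x : ℝ) (p : E) :
    HasDerivAt (fun s => Φ (s, p)) (fderiv ℝ Φ (x, p) (1, 0)) x :=
  ((hΦ.differentiable one_ne_zero _).hasFDerivAt).comp_hasDerivAt x
    ((hasDerivAt_id x).prodMk (hasDerivAt_const x p))

theorem ContDiff.continuous_deriv_fst_slice {Φ : ℝ × E → F} (hΦ : ContDiff ℝ 1 Φ) :
    Continuous fun z : ℝ × E => deriv (fun s => Φ (s, z.2)) z.1 := by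
  simp only [fun z : ℝ × E => (hΦ.hasDerivAt_fst_slice z.1 z.2).deriv]
  exact (hΦ.continuous_fderiv one_ne_zero).clm_apply continuous_const

theorem fderiv_comp_apply_eq_deriv_comp {H : ℝ × E → E} {g : E → F} {t : ℝ} {p : E}
    (hH : DifferentiableAt ℝ H (t, p)) (hg : DifferentiableAt ℝ g (H (t, p)))
    {L : E →L[ℝ] E} (hL : (fderiv ℝ (fun q => H (t, q)) p).comp L = ContinuousLinearMap.id ℝ E) :
    fderiv ℝ (fun q => g (H (t, q))) p (L (deriv (fun τ => H (τ, p)) t)) =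
      deriv (fun τ => g (H (τ, p))) t := by
  have hHp : DifferentiableAt ℝ (fun q => H (t, q)) p :=
    hH.comp p (differentiableAt_const t |>.prodMk differentiableAt_id)
  have hHt : DifferentiableAt ℝ (fun τ => H (τ, p)) t :=
    hH.comp t (differentiableAt_id.prodMk (differentiableAt_const p))
  have hLv := congrArg (fun A : E →L[ℝ] E => A (deriv (fun τ => H (τ, p)) t)) hL
  simp only [ContinuousLinearMap.comp_apply, ContinuousLinearMap.id_apply] at hLv
  rw [fderiv_fun_comp p hg hHp, ContinuousLinearMap.comp_apply, hLv,
    ← fderiv_comp_deriv t hg hHt]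
  rfl

theorem exists_contDiff_hasCompactSupport_eqOn_closedBall [FiniteDimensional ℝ E] {n : ℕ∞}
    {g : E → ℝ} (hg : ContDiff ℝ n g) (c : E) {R : ℝ} (hR : 0 < R) :
    ∃ f : E → ℝ, ContDiff ℝ n f ∧ HasCompactSupport f ∧ EqOn f g (closedBall c R) := by
  let χ : ContDiffBump c := ⟨R, R + 1, hR, by linarith⟩
  refine ⟨fun p => χ p * g p, χ.contDiff.mul hg, χ.hasCompactSupport.mul_right, fun p hp => ?_⟩
  simp [χ.one_of_mem_closedBall hp]

end Calculus

section Integral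

variable {E : Type*} [NormedAddCommGroup E] [NormedSpace ℝ E] [MeasurableSpace E]
  [BorelSpace E] {μ : Measure E} [IsFiniteMeasureOnCompacts μ]

theorem hasDerivAt_integral_of_contDiff {Φ : ℝ × E → ℝ} (hΦ : ContDiff ℝ 1 Φ)
    {K : Set E} (hK : IsCompact K) (hstat : ∀ τ p, p ∉ K → deriv (fun s => Φ (s, p)) τ = 0)
    (t : ℝ) (hint : Integrable (fun p => Φ (t, p)) μ) :
    HasDerivAt (fun τ => ∫ p, Φ (τ, p) ∂μ) (∫ p, deriv (fun s => Φ (s, p)) t ∂μ) t := by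
  have hF' := hΦ.continuous_deriv_fst_slice
  obtain ⟨C, hC⟩ := ((isCompact_closedBall t 1).prod hK).exists_bound_of_continuousOn
    hF'.continuousOn
  have h_bound : ∀ p, ∀ x ∈ ball t 1,
      ‖deriv (fun s => Φ (s, p)) x‖ ≤ K.indicator (fun _ => C) p := by
    intro p x hx
    by_cases hp : p ∈ K
    · simpa [hp] using hC (x, p) ⟨ball_subset_closedBall hx, hp⟩
    · simp [hp, hstat x p hp]
  have h_slice : ∀ x, Continuous fun p => Φ (x, p) := fun x =>
    hΦ.continuous.comp (continuous_const.prodMk continuous_id)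
  exact (hasDerivAt_integral_of_dominated_loc_of_deriv_le (ball_mem_nhds t one_pos)
    (.of_forall fun x => (h_slice x).aestronglyMeasurable) hint
    (hF'.comp (continuous_const.prodMk continuous_id)).aestronglyMeasurable
    (ae_of_all _ h_bound)
    ((integrable_indicator_iff hK.measurableSet).2 (integrableOn_const hK.measure_lt_top.ne))
    (ae_of_all _ fun p x _ => (hΦ.differentiable one_ne_zero _).comp x
      (differentiableAt_id.prodMk (differentiableAt_const p)) |>.hasDerivAt)).2

theorem integral_deriv_comp_eq_zero_of_hasCompactSupport {H : ℝ × E → E} (hH : ContDiff ℝ 1 H)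
    {K : Set E} (hK : IsCompact K) (hout : ∀ τ p, p ∉ K → H (τ, p) = p)
    (hpres : ∀ τ, μ.map (fun p => H (τ, p)) = μ) {g : E → ℝ} (hg : ContDiff ℝ 1 g)
    (hgc : HasCompactSupport g) (t : ℝ) :
    ∫ p, deriv (fun τ => g (H (τ, p))) t ∂μ = 0 := by
  have hH_slice : ∀ τ, AEMeasurable (fun p => H (τ, p)) μ := fun τ =>
    (hH.continuous.comp (continuous_const.prodMk continuous_id)).aemeasurable
  have hg_int : Integrable g μ := hg.continuous.integrable_of_hasCompactSupport hgc
  have h_invariant : ∀ τ, ∫ p, g (H (τ, p)) ∂μ = ∫ p, g p ∂μ := fun τ => by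
    conv_rhs => rw [← hpres τ]
    exact (integral_map (hH_slice τ) hg.continuous.aestronglyMeasurable).symm
  have hint : Integrable (fun p => g (H (t, p))) μ := by
    refine (integrable_map_measure hg.continuous.aestronglyMeasurable (hH_slice t)).1 ?_
    rwa [hpres t]
  have hderiv := hasDerivAt_integral_of_contDiff (hg.comp hH) hK
    (fun τ p hp => by simp [hout _ p hp]) t hint
  simp only [Function.comp_apply, h_invariant] at hderiv
  exact hderiv.unique (hasDerivAt_const t _)

theorem integral_deriv_comp_eq_zero [FiniteDimensional ℝ E] {H : ℝ × E → E}
    (hH : ContDiff ℝ 1 H) {K : Set E} (hK : IsCompact K) (hout : ∀ τ p, p ∉ K → H (τ, p) = p)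
    (hpres : ∀ τ, μ.map (fun p => H (τ, p)) = μ) {g : E → ℝ} (hg : ContDiff ℝ 1 g) (t : ℝ) :
    ∫ p, deriv (fun τ => g (H (τ, p))) t ∂μ = 0 := by
  obtain ⟨R, hR, hKR⟩ := (hK.image (hH.continuous.comp
    (continuous_const.prodMk continuous_id))).isBounded.subset_ball_lt 0 (0 : E)
  obtain ⟨f, hf, hfc, hfg⟩ := exists_contDiff_hasCompactSupport_eqOn_closedBall hg (0 : E) hR
  have h_local : ∀ p, deriv (fun τ => g (H (τ, p))) t = deriv (fun τ => f (H (τ, p))) t := by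
    intro p
    by_cases hp : p ∈ K
    · refine Filter.EventuallyEq.deriv_eq ?_
      have hball : ∀ᶠ τ in nhds t, H (τ, p) ∈ ball (0 : E) R :=
        (hH.continuous.comp (continuous_id.prodMk continuous_const)).continuousAt.preimage_mem_nhds
          (isOpen_ball.mem_nhds (hKR (mem_image_of_mem _ hp)))
      filter_upwards [hball] with τ hτ
      exact (hfg (ball_subset_closedBall hτ)).symm
    · simp [hout _ p hp]
  simp only [h_local]
  exact integral_deriv_comp_eq_zero_of_hasCompactSupport hH hK hout hpres hf hfc t

end Integral

theorem stmt_13_general {d : ℕ} (μ : Measure (Fin d → ℝ)) [IsFiniteMeasure μ]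
    (h : ℝ × (Fin d → ℝ) → Fin d → ℝ) (hC2 : ContDiff ℝ 2 h)
    (Dinv : ℝ → (Fin d → ℝ) → ((Fin d → ℝ) →L[ℝ] (Fin d → ℝ)))
    (hDinv : ∀ t p,
      (Dinv t p).comp (fderiv ℝ (fun q => h (t, q)) p) =
        ContinuousLinearMap.id ℝ (Fin d → ℝ) ∧
      (fderiv ℝ (fun q => h (t, q)) p).comp (Dinv t p) =
        ContinuousLinearMap.id ℝ (Fin d → ℝ))
    (K : Set (Fin d → ℝ)) (hK : IsCompact K)
    (hout : ∀ t p, p ∉ K → h (t, p) = p)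
    (hpres : ∀ t, Measure.map (fun p => h (t, p)) μ = μ)
    (g : (Fin d → ℝ) → ℝ) (hg : ContDiff ℝ 1 g) :
    ∀ t : ℝ,
      ∫ p, fderiv ℝ (fun q => g (h (t, q))) p
          (Dinv t p (deriv (fun τ => h (τ, p)) t)) ∂μ = 0 := by
  intro t
  have hC1 : ContDiff ℝ 1 h := hC2.of_le one_le_two
  calc ∫ p, fderiv ℝ (fun q => g (h (t, q))) p (Dinv t p (deriv (fun τ => h (τ, p)) t)) ∂μ
      = ∫ p, deriv (fun τ => g (h (τ, p))) t ∂μ :=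
        integral_congr_ae <| ae_of_all _ fun p => fderiv_comp_apply_eq_deriv_comp
          (hC1.differentiable one_ne_zero _) (hg.differentiable one_ne_zero _) (hDinv t p).2
    _ = 0 := integral_deriv_comp_eq_zero hC1 hK hout hpres hg t

/-- If a `C²` family of diffeomorphisms `h_t` of `ℝ^d` (equal to the identity
outside a compact set and with `h₀ = id`) preserves a finite Borel measure `μ`,
then for every `C¹` function `g` and every `t`, the integral of the Lie
derivative of `g ∘ h_t` along the tangent field
`X_t(p) = (D_p h_t(p))⁻¹ (∂_t h_t(p))` vanishes. -/
theorem stmt_13 {d : ℕ} (μ : Measure (Fin d → ℝ)) [IsFiniteMeasure μ]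
    (h : ℝ × (Fin d → ℝ) → Fin d → ℝ) (hC2 : ContDiff ℝ 2 h)
    (h0 : ∀ p, h (0, p) = p)
    (Dinv : ℝ → (Fin d → ℝ) → ((Fin d → ℝ) →L[ℝ] (Fin d → ℝ)))
    (hDinv : ∀ t p,
      (Dinv t p).comp (fderiv ℝ (fun q => h (t, q)) p) =
        ContinuousLinearMap.id ℝ (Fin d → ℝ) ∧
      (fderiv ℝ (fun q => h (t, q)) p).comp (Dinv t p) =
        ContinuousLinearMap.id ℝ (Fin d → ℝ))
    (K : Set (Fin d → ℝ)) (hK : IsCompact K)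
    (hout : ∀ t p, p ∉ K → h (t, p) = p)
    (hpres : ∀ t, Measure.map (fun p => h (t, p)) μ = μ)
    (g : (Fin d → ℝ) → ℝ) (hg : ContDiff ℝ 1 g) :
    ∀ t : ℝ,
      ∫ p, fderiv ℝ (fun q => g (h (t, q))) p
          (Dinv t p (deriv (fun τ => h (τ, p)) t)) ∂μ = 0 :=
  stmt_13_general μ h hC2 Dinv hDinv K hK hout hpres g hg
end

section
/- Let (M, μ) be a measure space with μ(M) < ∞, let s ∈ (0, 1] and K ≥ 0, and let g : ℝ × M → ℝ be such that for every t the map p ↦ g(t, p) is measurable, g(0, p) = 1 for all p, and |g(t, p) − g(t′, p)| ≤ K·|t − t′|^s for all t, t′, p. Then for every t with K·|t|^s ≤ 1/2, the function p ↦ log g(t, p) is well defined (g(t, p) ≥ 1/2) and |∫ log g(t, p) dμ(p) − (∫ g(t, p) dμ(p) − μ(M))| ≤ 2·K²·μ(M)·|t|^{2s}. Consequently, if s > 1/2 and the function G(t) = ∫ g(t, p) dμ(p) is differentiable at t = 0, then H(t) = ∫ log g(t, p) dμ(p) is differentiable at t = 0 with H′(0) = G′(0). -/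
/-!
Since `g(0, ·) = 1`, the Hölder bound gives `|g(t, p) - 1| ≤ K|t|^s`, and for `|x - 1| ≤ 1/2`
the Taylor remainder of the logarithm gives `|log x - (x - 1)| ≤ 2(x - 1)²`; integrating yields
the estimate. For `s > 1/2` the difference `H - (G - μ(M))` is `O(|t|^{2s}) = o(t)` and vanishes
at `0`, so `H` and `G` have the same derivative there.
-/

open MeasureTheory Filter Asymptotics Topology

theorem Real.abs_log_sub_sub_one_le {x : ℝ} (hx : |x - 1| ≤ 1 / 2) :
    |Real.log x - (x - 1)| ≤ 2 * (x - 1) ^ 2 := by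
  have hx' : |1 - x| ≤ 1 / 2 := by rwa [abs_sub_comm]
  have taylor := Real.abs_log_sub_add_sum_range_le (x := 1 - x) (by linarith) 1
  simp only [Finset.sum_range_one, pow_one, Nat.cast_zero, zero_add, div_one,
    sub_sub_cancel, Nat.reduceAdd] at taylor
  rw [le_div_iff₀ (by linarith), abs_sub_comm 1 x, sq_abs] at taylor
  calc |Real.log x - (x - 1)| = |1 - x + Real.log x| := by ring_nf
    _ ≤ 2 * (x - 1) ^ 2 := by nlinarith [abs_nonneg (1 - x + Real.log x)]

theorem Asymptotics.isLittleO_abs_rpow_id {q : ℝ} (hq : 1 < q) :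
    (fun t : ℝ => |t| ^ q) =o[𝓝 0] fun t => t := by
  have hsmall : (fun t : ℝ => |t| ^ (q - 1)) =o[𝓝 0] fun _ => (1 : ℝ) :=
    (isLittleO_one_iff ℝ).2 <|
      (continuous_abs.tendsto' 0 0 abs_zero).rpow_const_nhds_zero (by linarith)
  have hsplit : ∀ t : ℝ, |t| ^ q = |t| ^ (q - 1) * |t| := fun t => by
    conv_lhs => rw [← sub_add_cancel q 1]
    rw [Real.rpow_add' (abs_nonneg t) (by linarith), Real.rpow_one]
  simpa only [hsplit, one_mul] using hsmall.mul_isBigO (isBigO_abs_left.2 (isBigO_refl _ _))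

theorem HasDerivAt.of_isBigO_abs_rpow_sub {F G : ℝ → ℝ} {G' x q : ℝ} (hG : HasDerivAt G G' x)
    (hq : 1 < q) (hx : F x = G x) (hFG : (fun t => F t - G t) =O[𝓝 x] fun t => |t - x| ^ q) :
    HasDerivAt F G' x := by
  have hsub : HasDerivAt (fun t => F t - G t) 0 x := by
    rw [hasDerivAt_iff_isLittleO]
    have hlin : (fun t => |t - x| ^ q) =o[𝓝 x] fun t => t - x :=
      (isLittleO_abs_rpow_id hq).comp_tendsto (tendsto_sub_nhds_zero_iff.2 tendsto_id)
    simpa [hx] using hFG.trans_isLittleO hlin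
  exact ((hG.add hsub).congr_deriv (add_zero G')).congr_of_eventuallyEq
    (.of_forall fun t => (add_sub_cancel (G t) (F t)).symm)

theorem MeasureTheory.abs_integral_log_sub_integral_sub_le {M : Type*} [MeasurableSpace M]
    {μ : Measure M} [IsFiniteMeasure μ] {f : M → ℝ} {ε : ℝ} (hf : AEMeasurable f μ)
    (hε : ε ≤ 1 / 2) (hfε : ∀ᵐ p ∂μ, |f p - 1| ≤ ε) :
    |∫ p, Real.log (f p) ∂μ - (∫ p, f p ∂μ - μ.real Set.univ)| ≤ 2 * ε ^ 2 * μ.real Set.univ := by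
  have hpt : ∀ᵐ p ∂μ, ‖Real.log (f p) - (f p - 1)‖ ≤ 2 * ε ^ 2 := by
    filter_upwards [hfε] with p hp
    rw [Real.norm_eq_abs]
    refine (Real.abs_log_sub_sub_one_le (hp.trans hε)).trans ?_
    rw [← sq_abs]
    gcongr
  have hf_sub_one : Integrable (fun p => f p - 1) μ :=
    .of_bound (hf.sub_const 1).aestronglyMeasurable ε (by simpa only [Real.norm_eq_abs] using hfε)
  have hlog_sub : Integrable (fun p => Real.log (f p) - (f p - 1)) μ :=
    .of_bound ((Real.measurable_log.comp_aemeasurable hf).sub (hf.sub_const 1)).aestronglyMeasurable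
      _ hpt
  have hlog : Integrable (fun p => Real.log (f p)) μ :=
    (hlog_sub.add hf_sub_one).congr (.of_forall fun p => sub_add_cancel _ _)
  have hf_int : Integrable f μ :=
    (hf_sub_one.add (integrable_const 1)).congr (.of_forall fun p => sub_add_cancel _ _)
  have hint : ∫ p, (Real.log (f p) - (f p - 1)) ∂μ
      = ∫ p, Real.log (f p) ∂μ - (∫ p, f p ∂μ - μ.real Set.univ) := by
    rw [integral_sub hlog hf_sub_one, integral_sub hf_int (integrable_const 1), integral_const,
      smul_eq_mul, mul_one]
  rw [← hint]
  exact norm_integral_le_of_norm_le_const hpt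

theorem stmt_14_general {M : Type*} [MeasurableSpace M] (μ : Measure M) [IsFiniteMeasure μ]
    (s K : ℝ)
    (g : ℝ → M → ℝ) (hmeas : ∀ t, Measurable (g t))
    (hg0 : ∀ p, g 0 p = 1)
    (hhol : ∀ t t' : ℝ, ∀ p, |g t p - g t' p| ≤ K * |t - t'| ^ s) :
    (∀ t : ℝ, K * |t| ^ s ≤ 1 / 2 →
      (∀ p, (1:ℝ) / 2 ≤ g t p) ∧
      |(∫ p, Real.log (g t p) ∂μ) - ((∫ p, g t p ∂μ) - (μ Set.univ).toReal)| ≤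
        2 * K ^ 2 * (μ Set.univ).toReal * |t| ^ (2 * s)) ∧
    (1 / 2 < s → ∀ G' : ℝ, HasDerivAt (fun t => ∫ p, g t p ∂μ) G' 0 →
      HasDerivAt (fun t => ∫ p, Real.log (g t p) ∂μ) G' 0) := by
  have hnear_one : ∀ t p, |g t p - 1| ≤ K * |t| ^ s := fun t p => by
    simpa [hg0] using hhol t 0 p
  have hlocal : ∀ t : ℝ, K * |t| ^ s ≤ 1 / 2 →
      (∀ p, (1:ℝ) / 2 ≤ g t p) ∧
      |(∫ p, Real.log (g t p) ∂μ) - ((∫ p, g t p ∂μ) - (μ Set.univ).toReal)| ≤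
        2 * K ^ 2 * (μ Set.univ).toReal * |t| ^ (2 * s) := fun t ht => by
    refine ⟨fun p => by linarith [(abs_le.1 ((hnear_one t p).trans ht)).1], ?_⟩
    have hsq : (K * |t| ^ s) ^ 2 = K ^ 2 * |t| ^ (2 * s) := by
      rw [mul_pow, mul_comm 2 s, Real.rpow_mul (abs_nonneg t), Real.rpow_two]
    have h := abs_integral_log_sub_integral_sub_le (μ := μ) (hmeas t).aemeasurable ht
      (.of_forall (hnear_one t))
    rw [hsq, measureReal_def] at h
    exact h.trans_eq (by ring)
  refine ⟨hlocal, fun hs G' hG => ?_⟩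
  have hsmall : ∀ᶠ t in 𝓝 0, K * |t| ^ s ≤ 1 / 2 := by
    have : Tendsto (fun t : ℝ => K * |t| ^ s) (𝓝 0) (𝓝 0) := by
      simpa using ((continuous_abs.tendsto' 0 0 abs_zero).rpow_const_nhds_zero
        (by linarith : (0:ℝ) < s)).const_mul K
    exact this.eventually_le_const (by norm_num)
  refine (hG.sub_const (μ Set.univ).toReal).of_isBigO_abs_rpow_sub (q := 2 * s) (by linarith)
    (by simp [hg0, measureReal_def]) ?_
  refine isBigO_iff.2 ⟨2 * K ^ 2 * (μ Set.univ).toReal, ?_⟩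
  filter_upwards [hsmall] with t ht
  simpa [abs_of_nonneg (Real.rpow_nonneg (abs_nonneg t) _)] using (hlocal t ht).2

/-- If `g(t,·)` is uniformly `s`-Hölder in `t` with constant `K` and `g(0,·) = 1`,
then for `K·|t|^s ≤ 1/2` the function `log g(t,·)` is well defined and
`∫ log g(t,p) dμ` differs from `∫ g(t,p) dμ − μ(M)` by at most `2K²μ(M)|t|^{2s}`.
Consequently, for `s > 1/2`, if `G(t) = ∫ g(t,p) dμ` is differentiable at `0`,
so is `H(t) = ∫ log g(t,p) dμ`, with the same derivative. -/
theorem stmt_14 {M : Type*} [MeasurableSpace M] (μ : Measure M) [IsFiniteMeasure μ]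
    (s K : ℝ) (hs : s ∈ Set.Ioc (0:ℝ) 1) (hK : 0 ≤ K)
    (g : ℝ → M → ℝ) (hmeas : ∀ t, Measurable (g t))
    (hg0 : ∀ p, g 0 p = 1)
    (hhol : ∀ t t' : ℝ, ∀ p, |g t p - g t' p| ≤ K * |t - t'| ^ s) :
    (∀ t : ℝ, K * |t| ^ s ≤ 1 / 2 →
      (∀ p, (1:ℝ) / 2 ≤ g t p) ∧
      |(∫ p, Real.log (g t p) ∂μ) - ((∫ p, g t p ∂μ) - (μ Set.univ).toReal)| ≤
        2 * K ^ 2 * (μ Set.univ).toReal * |t| ^ (2 * s)) ∧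
    (1 / 2 < s → ∀ G' : ℝ, HasDerivAt (fun t => ∫ p, g t p ∂μ) G' 0 →
      HasDerivAt (fun t => ∫ p, Real.log (g t p) ∂μ) G' 0) :=
  stmt_14_general μ s K g hmeas hg0 hhol
end

section
/- Let U ⊆ ℝ^d be an open set and let α : U → (ℝ^d)* be a continuous 1-form on U (a continuous map into the continuous linear functionals on ℝ^d). Suppose that for every C^∞ vector field X : ℝ^d → ℝ^d with compact support contained in U and everywhere vanishing divergence (div X(x) = trace(DX(x)) = 0 for all x), one has ∫_U α(x)(X(x)) dx = 0 with respect to Lebesgue measure. Then α is exact in the sense that for every closed continuously differentiable curve γ : [0,1] → U with γ(0) = γ(1), the line integral vanishes: ∫₀¹ α(γ(t))(γ′(t)) dt = 0. -/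
/-!
Let `γ` be a closed `C¹` curve in `U` and `φ` a normalized bump supported in a small ball. The
vector field `X x = ∫₀¹ φ (x - γ t) • γ' t dt` (the curve, viewed as a current, mollified by `φ`)
is smooth, supported near the curve, and divergence free, because its divergence
`∫₀¹ Dφ (x - γ t) (γ' t) dt = φ (x - γ 0) - φ (x - γ 1)` vanishes for a closed curve. So the
hypothesis gives `∫ α (X) = 0`. By Fubini and the symmetry of `φ`,
`∫ α (X) = ∫₀¹ (φ ⋆ α) (γ t) (γ' t) dt`, and by uniform continuity of `α` near the curve this
differs from the line integral of `α` by at most `η * sup ‖γ'‖`, with `η → 0` as the bump shrinks.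
-/

open MeasureTheory Metric Set Function Filter Topology
open scoped ContDiff Convolution

universe u

section Smoothing

-- A single universe, because the induction below passes from `F` to `E →L[ℝ] F`.
variable {E F G : Type u} [NormedAddCommGroup E] [NormedSpace ℝ E]
  [NormedAddCommGroup F] [NormedSpace ℝ F] [NormedAddCommGroup G] [NormedSpace ℝ G]
  {g : E → F} {γ : ℝ → E} {c : ℝ → F →L[ℝ] G} {a b : ℝ}

theorem hasFDerivAt_intervalIntegral_comp_sub (hg : ContDiff ℝ 1 g) (hgs : HasCompactSupport g)
    (hγ : Continuous γ) (hc : Continuous c) (x₀ : E) :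
    HasFDerivAt (fun x => ∫ t in a..b, c t (g (x - γ t)))
      (∫ t in a..b, (c t).comp (fderiv ℝ g (x₀ - γ t))) x₀ := by
  have hg' : Continuous (fderiv ℝ g) := hg.continuous_fderiv one_ne_zero
  obtain ⟨M, hM⟩ := (hgs.fderiv (𝕜 := ℝ)).exists_bound_of_continuous hg'
  obtain ⟨C, hC⟩ := (isCompact_uIcc (a := a) (b := b)).exists_bound_of_continuousOn hc.continuousOn
  have hF : ∀ x, Continuous fun t => c t (g (x - γ t)) := by fun_prop
  have hF' : Continuous fun t => (c t).comp (fderiv ℝ g (x₀ - γ t)) := by fun_prop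
  refine intervalIntegral.hasFDerivAt_integral_of_dominated_of_fderiv_le (s := univ)
    (F' := fun x t => (c t).comp (fderiv ℝ g (x - γ t))) (bound := fun _ => C * M) univ_mem
    (Eventually.of_forall fun x => (hF x).aestronglyMeasurable)
    ((hF x₀).intervalIntegrable a b) hF'.aestronglyMeasurable ?_ intervalIntegrable_const ?_
  · refine Eventually.of_forall fun t ht x _ => ?_
    exact (ContinuousLinearMap.opNorm_comp_le _ _).trans
      (mul_le_mul (hC t (uIoc_subset_uIcc ht)) (hM _) (norm_nonneg _)
        ((norm_nonneg _).trans (hC t (uIoc_subset_uIcc ht))))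
  · refine Eventually.of_forall fun t _ x _ => ?_
    have hsub : HasFDerivAt (fun x => x - γ t) (ContinuousLinearMap.id ℝ E) x :=
      (hasFDerivAt_id x).sub_const (γ t)
    simpa [Function.comp_def] using (c t).hasFDerivAt.comp x
      (((hg.differentiable one_ne_zero) (x - γ t)).hasFDerivAt.comp x hsub)

theorem contDiff_intervalIntegral_comp_sub {n : ℕ} (hg : ContDiff ℝ n g)
    (hgs : HasCompactSupport g) (hγ : Continuous γ) (hc : Continuous c) :
    ContDiff ℝ n (fun x => ∫ t in a..b, c t (g (x - γ t))) := by
  induction n generalizing F G with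
  | zero =>
    exact contDiff_zero.2 (intervalIntegral.continuous_parametric_intervalIntegral_of_continuous'
      (by fun_prop) a b)
  | succ n ih =>
    have hg1 : ContDiff ℝ 1 g := hg.of_le (by exact_mod_cast Nat.le_add_left 1 n)
    rw [Nat.cast_succ]
    refine contDiff_succ_iff_fderiv.2 ⟨fun x =>
      (hasFDerivAt_intervalIntegral_comp_sub hg1 hgs hγ hc x).differentiableAt, by simp, ?_⟩
    rw [show fderiv ℝ (fun x => ∫ t in a..b, c t (g (x - γ t))) = _ from
      funext fun x => (hasFDerivAt_intervalIntegral_comp_sub hg1 hgs hγ hc x).fderiv]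
    exact ih (c := fun t => ContinuousLinearMap.compL ℝ E F G (c t))
      (hg.fderiv_right (by push_cast; exact le_rfl)) (hgs.fderiv (𝕜 := ℝ)) (by fun_prop)

end Smoothing

theorem ContinuousOn.exists_continuous_eqOn_Icc {X : Type*} [TopologicalSpace X] {f : ℝ → X}
    {a b : ℝ} (hab : a ≤ b) (hf : ContinuousOn f (Icc a b)) :
    ∃ g : ℝ → X, Continuous g ∧ EqOn g f (Icc a b) :=
  ⟨IccExtend hab ((Icc a b).domRestrict f),
    continuous_IccExtend_iff.2 (continuousOn_iff_continuous_domRestrict.1 hf),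
    fun _ ht => IccExtend_of_mem hab _ ht⟩

section SmearedCurrent

-- `Type` rather than `Type*`: the smoothing lemmas are applied with `F = ℝ` and `G = E`.
variable {E : Type} [NormedAddCommGroup E] [NormedSpace ℝ E] {φ : E → ℝ} {γ γ' : ℝ → E}

noncomputable def smearedCurrent (φ : E → ℝ) (γ γ' : ℝ → E) (x : E) : E :=
  ∫ t in (0 : ℝ)..1, φ (x - γ t) • γ' t

theorem smearedCurrent_congr {γ₁ γ₁' : ℝ → E} (hγ : EqOn γ γ₁ (Icc 0 1))
    (hγ' : EqOn γ' γ₁' (Icc 0 1)) : smearedCurrent φ γ γ' = smearedCurrent φ γ₁ γ₁' := by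
  ext1 x
  refine intervalIntegral.integral_congr fun t ht => ?_
  rw [uIcc_of_le zero_le_one] at ht
  simp only [hγ ht, hγ' ht]

theorem hasFDerivAt_smearedCurrent (hφ : ContDiff ℝ 1 φ) (hφs : HasCompactSupport φ)
    (hγ : ContinuousOn γ (Icc 0 1)) (hγ' : ContinuousOn γ' (Icc 0 1)) (x : E) :
    HasFDerivAt (smearedCurrent φ γ γ')
      (∫ t in (0 : ℝ)..1, (fderiv ℝ φ (x - γ t)).smulRight (γ' t)) x := by
  obtain ⟨γ₁, hγ₁, hγγ₁⟩ := hγ.exists_continuous_eqOn_Icc zero_le_one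
  obtain ⟨γ₁', hγ₁', hγγ₁'⟩ := hγ'.exists_continuous_eqOn_Icc zero_le_one
  rw [smearedCurrent_congr hγγ₁.symm hγγ₁'.symm]
  refine (hasFDerivAt_intervalIntegral_comp_sub (a := 0) (b := 1)
    (c := fun t => .toSpanSingleton ℝ (γ₁' t)) hφ hφs hγ₁
    ((ContinuousLinearMap.toSpanSingletonCLE (𝕜 := ℝ) (E := E)).continuous.comp hγ₁')
    x).congr_fderiv (intervalIntegral.integral_congr fun t ht => ?_)
  rw [uIcc_of_le zero_le_one] at ht
  simp only [hγγ₁ ht, hγγ₁' ht, ContinuousLinearMap.toSpanSingleton_comp]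

theorem contDiff_smearedCurrent (hφ : ContDiff ℝ ∞ φ) (hφs : HasCompactSupport φ)
    (hγ : ContinuousOn γ (Icc 0 1)) (hγ' : ContinuousOn γ' (Icc 0 1)) :
    ContDiff ℝ ∞ (smearedCurrent φ γ γ') := by
  obtain ⟨γ₁, hγ₁, hγγ₁⟩ := hγ.exists_continuous_eqOn_Icc zero_le_one
  obtain ⟨γ₁', hγ₁', hγγ₁'⟩ := hγ'.exists_continuous_eqOn_Icc zero_le_one
  rw [smearedCurrent_congr hγγ₁.symm hγγ₁'.symm]
  exact contDiff_infty.2 fun n => contDiff_intervalIntegral_comp_sub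
    (c := fun t => .toSpanSingleton ℝ (γ₁' t)) (hφ.of_le (by exact_mod_cast le_top)) hφs hγ₁
    ((ContinuousLinearMap.toSpanSingletonCLE (𝕜 := ℝ) (E := E)).continuous.comp hγ₁')

theorem tsupport_smearedCurrent_subset {r : ℝ} (hφ : support φ ⊆ ball 0 r) :
    tsupport (smearedCurrent φ γ γ') ⊆ cthickening r (γ '' Icc 0 1) := by
  refine (closure_mono ?_).trans (closure_thickening_subset_cthickening r _)
  intro x hx
  by_contra hxΓ
  refine hx (intervalIntegral.integral_zero_ae (Eventually.of_forall fun t ht => ?_))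
  rw [uIoc_of_le zero_le_one] at ht
  suffices φ (x - γ t) = 0 by simp [this]
  refine notMem_support.1 fun hφx => hxΓ ?_
  exact mem_thickening_iff.2 ⟨γ t, mem_image_of_mem γ (Ioc_subset_Icc_self ht), by
    simpa [dist_eq_norm] using hφ hφx⟩

theorem trace_fderiv_smearedCurrent [FiniteDimensional ℝ E] (hφ : ContDiff ℝ 1 φ)
    (hφs : HasCompactSupport φ) (hγ : ∀ t ∈ Icc (0 : ℝ) 1, HasDerivAt γ (γ' t) t)
    (hγ' : ContinuousOn γ' (Icc 0 1)) (hclosed : γ 0 = γ 1) (x : E) :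
    LinearMap.trace ℝ E (fderiv ℝ (smearedCurrent φ γ γ') x) = 0 := by
  have hγc : ContinuousOn γ (Icc 0 1) := fun t ht => (hγ t ht).continuousAt.continuousWithinAt
  have hφ' : Continuous (fderiv ℝ φ) := hφ.continuous_fderiv one_ne_zero
  let tr : (E →L[ℝ] E) →L[ℝ] ℝ :=
    LinearMap.toContinuousLinearMap ((LinearMap.trace ℝ E).comp (ContinuousLinearMap.coeLM ℝ))
  have hint : IntervalIntegrable (fun t => (fderiv ℝ φ (x - γ t)).smulRight (γ' t)) volume 0 1 := by
    refine ContinuousOn.intervalIntegrable ?_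
    rw [uIcc_of_le zero_le_one]
    exact (ContinuousLinearMap.smulRightL ℝ E E).continuous₂.comp_continuousOn
      ((hφ'.comp_continuousOn (continuousOn_const.sub hγc)).prodMk hγ')
  have hprim : ∀ t ∈ uIcc (0 : ℝ) 1,
      HasDerivAt (fun s => -φ (x - γ s)) (fderiv ℝ φ (x - γ t) (γ' t)) t := by
    intro t ht
    rw [uIcc_of_le zero_le_one] at ht
    have h := (((hφ.differentiable one_ne_zero) (x - γ t)).hasFDerivAt.comp_hasDerivAt t
      ((hγ t ht).const_sub x)).neg
    rwa [map_neg, neg_neg] at h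
  calc LinearMap.trace ℝ E (fderiv ℝ (smearedCurrent φ γ γ') x)
      = tr (∫ t in (0 : ℝ)..1, (fderiv ℝ φ (x - γ t)).smulRight (γ' t)) := by
        rw [(hasFDerivAt_smearedCurrent hφ hφs hγc hγ' x).fderiv]; rfl
    _ = ∫ t in (0 : ℝ)..1, fderiv ℝ φ (x - γ t) (γ' t) := by
        rw [← tr.intervalIntegral_comp_comm hint]
        simp [tr]
    _ = -φ (x - γ 1) - -φ (x - γ 0) := by
        refine intervalIntegral.integral_eq_sub_of_hasDerivAt hprim
          (ContinuousOn.intervalIntegrable ?_)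
        rw [uIcc_of_le zero_le_one]
        fun_prop
    _ = 0 := by rw [hclosed, sub_self]

end SmearedCurrent

section Mollification

variable {E : Type} [NormedAddCommGroup E] [NormedSpace ℝ E] [FiniteDimensional ℝ E]
  [MeasureSpace E] [BorelSpace E] [(volume : Measure E).IsAddHaarMeasure]
  {F : Type*} [NormedAddCommGroup F] [NormedSpace ℝ F]
  {φ : E → ℝ} {γ γ' : ℝ → E} {K : Set E} {α : E → E →L[ℝ] F}

theorem setIntegral_apply_smearedCurrent [CompleteSpace F] (hK : IsCompact K)
    (hα : ContinuousOn α K) (hφ : Continuous φ) (hγ : ContinuousOn γ (Icc 0 1))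
    (hγ' : ContinuousOn γ' (Icc 0 1)) :
    ∫ x in K, α x (smearedCurrent φ γ γ' x) =
      ∫ t in (0 : ℝ)..1, (∫ x in K, φ (x - γ t) • α x) (γ' t) := by
  have hint : IntegrableOn (fun p : E × ℝ => φ (p.1 - γ p.2) • α p.1 (γ' p.2))
      (K ×ˢ Icc 0 1) (volume.prod volume) :=
    ContinuousOn.integrableOn_compact (hK.prod isCompact_Icc)
      ((hφ.comp_continuousOn
        (continuousOn_fst.sub (hγ.comp continuousOn_snd fun _ hp => hp.2))).smul
        ((hα.comp continuousOn_fst fun _ hp => hp.1).clm_apply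
          (hγ'.comp continuousOn_snd fun _ hp => hp.2)))
  have hswap := integral_integral_swap (μ := volume.restrict K) (ν := volume.restrict (Ioc 0 1))
    (f := fun x t => φ (x - γ t) • α x (γ' t))
    (by rw [Measure.prod_restrict]; exact hint.mono_set (prod_mono le_rfl Ioc_subset_Icc_self))
  rw [intervalIntegral.integral_of_le zero_le_one]
  convert hswap using 1
  · refine setIntegral_congr_fun hK.measurableSet fun x _ => ?_
    have hcont : ContinuousOn (fun t => φ (x - γ t) • γ' t) (uIcc 0 1) := by
      rw [uIcc_of_le zero_le_one]; fun_prop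
    rw [smearedCurrent, ← (α x).intervalIntegral_comp_comm hcont.intervalIntegrable,
      intervalIntegral.integral_of_le zero_le_one]
    simp only [map_smul]
  · refine setIntegral_congr_fun measurableSet_Ioc fun t ht => ?_
    have hcont : ContinuousOn (fun x => φ (x - γ t) • α x) K := by fun_prop
    simp only [ContinuousLinearMap.integral_apply (hcont.integrableOn_compact hK),
      smul_apply]

theorem setIntegral_normed_smul_eq_convolution_indicator (φ : ContDiffBump (0 : E))
    (hK : MeasurableSet K) (g : E → F) (y : E) :
    ∫ x in K, φ.normed volume (x - y) • g x =
      (φ.normed volume ⋆[ContinuousLinearMap.lsmul ℝ ℝ, volume] K.indicator g) y := by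
  rw [convolution_eq_swap, ← integral_indicator hK]
  congr 1
  ext x
  by_cases hx : x ∈ K
  · simp [hx, ← φ.normed_neg (y - x)]
  · simp [hx]

theorem norm_sub_convolution_indicator_le [CompleteSpace F] (hK : MeasurableSet K)
    (hα : ContinuousOn α K) (φ : ContDiffBump (0 : E)) {x₀ : E} (hx₀ : ball x₀ φ.rOut ⊆ K)
    {η : ℝ} (hαη : ∀ x ∈ ball x₀ φ.rOut, dist (α x) (α x₀) ≤ η) :
    ‖α x₀ - (φ.normed volume ⋆[ContinuousLinearMap.lsmul ℝ ℝ, volume] K.indicator α) x₀‖ ≤ η := by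
  have hx₀K : x₀ ∈ K := hx₀ (mem_ball_self φ.rOut_pos)
  have hαK : ∀ x ∈ ball x₀ φ.rOut, dist (K.indicator α x) (K.indicator α x₀) ≤ η := fun x hx => by
    rw [indicator_of_mem (hx₀ hx), indicator_of_mem hx₀K]
    exact hαη x hx
  rw [← dist_eq_norm, dist_comm]
  simpa [indicator_of_mem hx₀K] using φ.dist_normed_convolution_le
    ((aestronglyMeasurable_indicator_iff hK).2 (hα.aestronglyMeasurable hK)) hαK

theorem norm_lineIntegral_sub_setIntegral_smearedCurrent_le [CompleteSpace F] (hK : IsCompact K)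
    (hα : ContinuousOn α K) (φ : ContDiffBump (0 : E)) (hγ : ContinuousOn γ (Icc 0 1))
    (hγ' : ContinuousOn γ' (Icc 0 1)) (hφK : cthickening φ.rOut (γ '' Icc 0 1) ⊆ K)
    {η C : ℝ} (hαη : ∀ x ∈ K, ∀ y ∈ K, dist x y < φ.rOut → dist (α x) (α y) ≤ η)
    (hC : ∀ t ∈ Icc (0 : ℝ) 1, ‖γ' t‖ ≤ C) :
    ‖(∫ t in (0 : ℝ)..1, α (γ t) (γ' t)) -
      ∫ x in K, α x (smearedCurrent (φ.normed volume) γ γ' x)‖ ≤ η * C := by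
  rw [setIntegral_apply_smearedCurrent hK hα φ.continuous_normed hγ hγ']
  simp_rw [setIntegral_normed_smul_eq_convolution_indicator φ hK.measurableSet]
  have hball : ∀ t ∈ Icc (0 : ℝ) 1, ball (γ t) φ.rOut ⊆ K := fun t ht =>
    (ball_subset_thickening (mem_image_of_mem γ ht) _).trans
      ((thickening_subset_cthickening _ _).trans hφK)
  set ψ := φ.normed volume ⋆[ContinuousLinearMap.lsmul ℝ ℝ, volume] K.indicator α
  have hαK : Integrable (K.indicator α) :=
    (integrable_indicator_iff hK.measurableSet).2 (hα.integrableOn_compact hK)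
  have hψ : Continuous ψ := φ.hasCompactSupport_normed.continuous_convolution_left _
    φ.continuous_normed hαK.locallyIntegrable
  have hγK : ∀ t ∈ Icc (0 : ℝ) 1, γ t ∈ K := fun t ht => hball t ht (mem_ball_self φ.rOut_pos)
  have hψα : ∀ t ∈ Icc (0 : ℝ) 1, ‖α (γ t) - ψ (γ t)‖ ≤ η := fun t ht =>
    norm_sub_convolution_indicator_le hK.measurableSet hα φ (hball t ht)
      fun x hx => hαη x (hball t ht hx) (γ t) (hγK t ht) hx
  have hint₁ : IntervalIntegrable (fun t => α (γ t) (γ' t)) volume 0 1 := by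
    refine ContinuousOn.intervalIntegrable ?_
    rw [uIcc_of_le zero_le_one]
    exact (hα.comp hγ hγK).clm_apply hγ'
  have hint₂ : IntervalIntegrable (fun t => ψ (γ t) (γ' t)) volume 0 1 := by
    refine ContinuousOn.intervalIntegrable ?_
    rw [uIcc_of_le zero_le_one]
    exact (hψ.comp_continuousOn hγ).clm_apply hγ'
  have hdiff : ∀ t ∈ Icc (0 : ℝ) 1, ‖α (γ t) (γ' t) - ψ (γ t) (γ' t)‖ ≤ η * C := fun t ht =>
    calc ‖α (γ t) (γ' t) - ψ (γ t) (γ' t)‖ = ‖(α (γ t) - ψ (γ t)) (γ' t)‖ := rfl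
      _ ≤ ‖α (γ t) - ψ (γ t)‖ * ‖γ' t‖ := ContinuousLinearMap.le_opNorm _ _
      _ ≤ η * C :=
        mul_le_mul (hψα t ht) (hC t ht) (norm_nonneg _) ((norm_nonneg _).trans (hψα t ht))
  calc ‖(∫ t in (0 : ℝ)..1, α (γ t) (γ' t)) - ∫ t in (0 : ℝ)..1, ψ (γ t) (γ' t)‖
      = ‖∫ t in (0 : ℝ)..1, (α (γ t) (γ' t) - ψ (γ t) (γ' t))‖ := by
        rw [intervalIntegral.integral_sub hint₁ hint₂]
    _ ≤ η * C * |1 - 0| := intervalIntegral.norm_integral_le_of_norm_le_const fun t ht =>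
        hdiff t (Ioc_subset_Icc_self (by rwa [uIoc_of_le zero_le_one] at ht))
    _ = η * C := by simp

theorem setIntegral_apply_smearedCurrent_eq_zero {U : Set E} (hU : IsOpen U) (hKU : K ⊆ U)
    (hK : IsCompact K) {α : E → E →L[ℝ] ℝ}
    (hint : ∀ X : E → E, ContDiff ℝ ∞ X → HasCompactSupport X → tsupport X ⊆ U →
      (∀ x, LinearMap.trace ℝ E (fderiv ℝ X x) = 0) → ∫ x in U, α x (X x) = 0)
    (φ : ContDiffBump (0 : E)) (hγ : ∀ t ∈ Icc (0 : ℝ) 1, HasDerivAt γ (γ' t) t)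
    (hγ' : ContinuousOn γ' (Icc 0 1)) (hclosed : γ 0 = γ 1)
    (hφK : cthickening φ.rOut (γ '' Icc 0 1) ⊆ K) :
    ∫ x in K, α x (smearedCurrent (φ.normed volume) γ γ' x) = 0 := by
  have hγc : ContinuousOn γ (Icc 0 1) := fun t ht => (hγ t ht).continuousAt.continuousWithinAt
  have hXK : tsupport (smearedCurrent (φ.normed volume) γ γ') ⊆ K :=
    (tsupport_smearedCurrent_subset φ.support_normed_eq.subset).trans hφK
  rw [← setIntegral_eq_of_subset_of_forall_sdiff_eq_zero hU.measurableSet hKU fun x hx => by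
    rw [image_eq_zero_of_notMem_tsupport fun h => hx.2 (hXK h), map_zero]]
  exact hint _ (contDiff_smearedCurrent φ.contDiff_normed φ.hasCompactSupport_normed hγc hγ')
    (hK.of_isClosed_subset (isClosed_tsupport _) hXK) (hXK.trans hKU)
    (trace_fderiv_smearedCurrent φ.contDiff_normed φ.hasCompactSupport_normed hγ hγ' hclosed)

end Mollification

/-- A continuous 1-form `α` on an open set `U ⊆ ℝ^d` which integrates to zero
against every compactly supported divergence-free `C^∞` vector field supported
in `U` is exact: its line integral over every closed `C¹` curve in `U` vanishes. -/
theorem stmt_15 {d : ℕ} (U : Set (Fin d → ℝ)) (hU : IsOpen U)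
    (α : (Fin d → ℝ) → ((Fin d → ℝ) →L[ℝ] ℝ)) (hα : ContinuousOn α U)
    (hint : ∀ X : (Fin d → ℝ) → Fin d → ℝ,
      ContDiff ℝ (⊤ : ℕ∞) X → HasCompactSupport X → tsupport X ⊆ U →
      (∀ x, LinearMap.trace ℝ (Fin d → ℝ)
        ((fderiv ℝ X x : (Fin d → ℝ) →L[ℝ] (Fin d → ℝ)) :
          (Fin d → ℝ) →ₗ[ℝ] (Fin d → ℝ)) = 0) →
      ∫ x in U, α x (X x) = 0) :
    ∀ (γ γ' : ℝ → Fin d → ℝ),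
      (∀ t ∈ Set.Icc (0:ℝ) 1, HasDerivAt γ (γ' t) t) →
      ContinuousOn γ' (Set.Icc (0:ℝ) 1) →
      (∀ t ∈ Set.Icc (0:ℝ) 1, γ t ∈ U) →
      γ 0 = γ 1 →
      ∫ t in (0:ℝ)..1, α (γ t) (γ' t) = 0 := by
  intro γ γ' hγ hγ' hγU hclosed
  have hγc : ContinuousOn γ (Icc 0 1) := fun t ht => (hγ t ht).continuousAt.continuousWithinAt
  have hΓ : IsCompact (γ '' Icc 0 1) := isCompact_Icc.image_of_continuousOn hγc
  obtain ⟨δ, hδ, hKU⟩ := hΓ.exists_cthickening_subset_open hU (image_subset_iff.2 hγU)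
  have hK : IsCompact (cthickening δ (γ '' Icc 0 1)) := hΓ.cthickening
  obtain ⟨C, hC⟩ := isCompact_Icc.exists_bound_of_continuousOn hγ'
  have hbound : ∀ η > 0, ‖∫ t in (0 : ℝ)..1, α (γ t) (γ' t)‖ ≤ η * C := by
    intro η hη
    obtain ⟨ε, hε, hαε⟩ :=
      uniformContinuousOn_iff.1 (hK.uniformContinuousOn_of_continuous (hα.mono hKU)) η hη
    let φ : ContDiffBump (0 : Fin d → ℝ) :=
      ⟨min ε δ / 2, min ε δ, by positivity, half_lt_self (lt_min hε hδ)⟩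
    have hφK : cthickening φ.rOut (γ '' Icc 0 1) ⊆ cthickening δ (γ '' Icc 0 1) :=
      cthickening_mono (min_le_right ε δ) _
    have h := norm_lineIntegral_sub_setIntegral_smearedCurrent_le hK (hα.mono hKU) φ hγc hγ' hφK
      (fun x hx y hy hxy => (hαε x hx y hy (hxy.trans_le (min_le_left ε δ))).le) hC
    rwa [setIntegral_apply_smearedCurrent_eq_zero hU hKU hK hint φ hγ hγ' hclosed hφK,
      sub_zero] at h
  have hlim : Tendsto (fun η => η * C) (𝓝[>] 0) (𝓝 0) := by
    simpa using ((continuous_mul_const C).tendsto 0).mono_left nhdsWithin_le_nhds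
  exact norm_le_zero_iff.1 (ge_of_tendsto hlim (eventually_nhdsWithin_of_forall hbound))
end

section
/- Let X : ℝ^d → ℝ^d be a continuously differentiable vector field and let φ : ℝ × ℝ^d → ℝ^d satisfy φ(0, p) = p and ∂_t φ(t, p) = X(φ(t, p)) for all (t, p) (φ is a flow of X). Suppose the flow is periodic of period one: φ(1, p) = p for all p. Then for every p ∈ ℝ^d, the average of the divergence of X along the orbit vanishes: ∫₀¹ div X(φ(s, p)) ds = 0, where div X(x) = trace(DX(x)). -/
/-!
Let `γ t = φ t p` and let `M` solve the variational equation `M' = DX(γ t) ∘ M`, `M 0 = 1`.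
A Grönwall estimate shows that `M t` is the derivative of `φ t` at `p`, so periodicity forces
`M 1 = 1`. By Liouville's formula `det M 1 = exp ∫₀¹ tr DX(γ s) ds`, hence the integral vanishes.
-/

open Set Metric Real NNReal Topology Filter

section LinearODE

variable {F : Type*} [NormedAddCommGroup F] [NormedSpace ℝ F]

theorem IsIntegralCurveOn.Icc_union {γ₁ γ₂ : ℝ → F} {v : ℝ → F → F} {a b c : ℝ}
    (hab : a ≤ b) (hbc : b ≤ c) (h₁ : IsIntegralCurveOn γ₁ v (Icc a b))
    (h₂ : IsIntegralCurveOn γ₂ v (Icc b c)) (h : γ₁ b = γ₂ b) :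
    IsIntegralCurveOn (fun t => if t ≤ b then γ₁ t else γ₂ t) v (Icc a c) := by
  set γ := fun t => if t ≤ b then γ₁ t else γ₂ t
  have e₁ : EqOn γ γ₁ (Icc a b) := fun t ht => if_pos ht.2
  have e₂ : EqOn γ γ₂ (Icc b c) := fun t ht => by
    rcases ht.1.eq_or_lt with rfl | hlt
    · exact (if_pos le_rfl).trans h
    · exact if_neg hlt.not_ge
  intro t ht
  rw [← Icc_union_Icc_eq_Icc hab hbc]
  refine HasDerivWithinAt.union ?_ ?_
  · by_cases hs : t ∈ Icc a b
    · exact (e₁ hs).symm ▸ (h₁ t hs).congr e₁ (e₁ hs)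
    · exact HasFDerivWithinAt.of_notMem_closure (by rwa [closure_Icc])
  · by_cases hs : t ∈ Icc b c
    · exact (e₂ hs).symm ▸ (h₂ t hs).congr e₂ (e₂ hs)
    · exact HasFDerivWithinAt.of_notMem_closure (by rwa [closure_Icc])

variable [CompleteSpace F]

theorem exists_isIntegralCurveOn_clm_of_mul_le {A : ℝ → F →L[ℝ] F} (hA : Continuous A)
    {a b : ℝ} (hab : a ≤ b) {K : ℝ≥0} (hK : ∀ t ∈ Icc a b, ‖A t‖₊ ≤ K)
    (hlen : 2 * K * (b - a) ≤ 1) (x₀ : F) :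
    ∃ x : ℝ → F, x a = x₀ ∧ IsIntegralCurveOn x (fun t y => A t y) (Icc a b) := by
  have hpl : IsPicardLindelof (fun t y => A t y) (⟨a, le_rfl, hab⟩ : Icc a b) x₀ ‖x₀‖₊ 0
      (2 * K * ‖x₀‖₊) K := by
    refine ⟨fun t ht => ((A t).lipschitz.weaken (hK t ht)).lipschitzOnWith,
      fun y _ => (hA.clm_apply continuous_const).continuousOn, fun t ht y hy => ?_, ?_⟩
    · have hy' : ‖y‖ ≤ 2 * ‖x₀‖ := by
        have := norm_le_norm_add_norm_sub' y x₀
        rw [mem_closedBall, dist_eq_norm] at hy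
        push_cast at hy
        linarith
      calc ‖A t y‖ ≤ ‖A t‖ * ‖y‖ := (A t).le_opNorm y
        _ ≤ K * (2 * ‖x₀‖) := mul_le_mul (hK t ht) hy' (norm_nonneg _) K.2
        _ = _ := by push_cast; ring
    · show ((2 * K * ‖x₀‖₊ : ℝ≥0) : ℝ) * max (b - a) (a - a) ≤ (‖x₀‖₊ : ℝ) - ((0 : ℝ≥0) : ℝ)
      push_cast
      rw [sub_self, max_eq_left (by linarith), sub_zero]
      nlinarith [norm_nonneg x₀]
  exact hpl.exists_eq_forall_mem_Icc_hasDerivWithinAt₀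

theorem exists_isIntegralCurveOn_clm {A : ℝ → F →L[ℝ] F} (hA : Continuous A) (a b : ℝ)
    (x₀ : F) : ∃ x : ℝ → F, x a = x₀ ∧ IsIntegralCurveOn x (fun t y => A t y) (Icc a b) := by
  rcases lt_or_ge b a with hba | hab
  · exact ⟨fun _ => x₀, rfl, by simp [IsIntegralCurveOn, Icc_eq_empty_of_lt hba]⟩
  obtain ⟨C, hC⟩ := (isCompact_Icc (a := a) (b := b)).exists_bound_of_continuousOn hA.continuousOn
  set K := C.toNNReal
  have hK : ∀ t ∈ Icc a b, ‖A t‖₊ ≤ K := fun t ht => by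
    rw [← NNReal.coe_le_coe, Real.coe_toNNReal', coe_nnnorm]
    exact (hC t ht).trans (le_max_left _ _)
  set ℓ : ℝ := (2 * K + 1)⁻¹
  have hℓ : 0 < ℓ := by positivity
  have hKℓ : 2 * K * ℓ ≤ 1 := by
    rw [← div_eq_mul_inv, div_le_one (by positivity)]
    linarith
  -- Picard–Lindelöf only covers intervals of length `ℓ`: glue such pieces backwards from `b`.
  have step : ∀ n : ℕ, ∀ c ∈ Icc a b, b - c ≤ n * ℓ → ∀ y₀ : F,
      ∃ x : ℝ → F, x c = y₀ ∧ IsIntegralCurveOn x (fun t y => A t y) (Icc c b) := by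
    have short : ∀ c d, a ≤ c → c ≤ d → d ≤ b → d - c ≤ ℓ → ∀ y₀ : F,
        ∃ x : ℝ → F, x c = y₀ ∧ IsIntegralCurveOn x (fun t y => A t y) (Icc c d) :=
      fun c d hac hcd hdb hdc => exists_isIntegralCurveOn_clm_of_mul_le hA hcd
        (fun t ht => hK t ⟨hac.trans ht.1, ht.2.trans hdb⟩)
        (hKℓ.trans' (mul_le_mul_of_nonneg_left hdc (by positivity)))
    intro n
    induction n with
    | zero => exact fun c hc hcb => short c b hc.1 hc.2 le_rfl (by simp at hcb; linarith)
    | succ n ih =>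
      intro c hc hcb y₀
      by_cases hshort : b - c ≤ ℓ
      · exact short c b hc.1 hc.2 le_rfl hshort y₀
      obtain ⟨x₁, hx₁c, hx₁⟩ := short c (c + ℓ) hc.1 (by linarith) (by linarith) (by simp) y₀
      obtain ⟨x₂, hx₂c, hx₂⟩ := ih (c + ℓ) ⟨by linarith [hc.1], by linarith⟩
        (by push_cast at hcb; linarith) (x₁ (c + ℓ))
      refine ⟨fun t => if t ≤ c + ℓ then x₁ t else x₂ t, by simp [hℓ.le, hx₁c], ?_⟩
      exact (hx₁.Icc_union (by linarith) (by linarith) hx₂ hx₂c.symm)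
  obtain ⟨x, hx₀, hx⟩ := step ⌈(b - a) / ℓ⌉₊ a ⟨le_rfl, hab⟩
    (by rw [← div_le_iff₀ hℓ]; exact Nat.le_ceil _) x₀
  exact ⟨x, hx₀, hx⟩

end LinearODE

section Flow

variable {E : Type*} [NormedAddCommGroup E] [NormedSpace ℝ E]

theorem IsIntegralCurve.dist_le_mul_exp {v : ℝ → E → E} {K : ℝ≥0} {U : Set E}
    (hv : ∀ t, LipschitzOnWith K (v t) U) {f g : ℝ → E} (hf : IsIntegralCurve f v)
    (hg : IsIntegralCurve g v) {a b δ : ℝ} (hU : ∀ t ∈ Icc a b, closedBall (g t) δ ⊆ U)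
    (hδ : dist (f a) (g a) * exp (K * (b - a)) < δ) :
    ∀ t ∈ Icc a b, dist (f t) (g t) ≤ dist (f a) (g a) * exp (K * (t - a)) := by
  set ρ := dist (f a) (g a)
  have hcont : Continuous fun t => dist (f t) (g t) := hf.continuous.dist hg.continuous
  -- continuous induction: while `f` stays in the `δ`-tube around `g`, Grönwall applies
  set S := {t | dist (f t) (g t) ≤ ρ * exp (K * (t - a))}
  refine IsClosed.Icc_subset_of_forall_mem_nhdsWithin (s := S)
    ((isClosed_le hcont (by fun_prop)).inter isClosed_Icc) (by simp [S, ρ]) ?_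
  rintro x ⟨hxρ, hxa, hxb⟩
  change dist (f x) (g x) ≤ ρ * exp (K * (x - a)) at hxρ
  have hxδ : dist (f x) (g x) < δ := by
    refine hxρ.trans_lt (lt_of_le_of_lt ?_ hδ)
    gcongr
  obtain ⟨c, hxc, hc⟩ : ∃ c ∈ Ioi x, Icc x c ⊆ {t | dist (f t) (g t) < δ ∧ t ≤ b} := by
    refine mem_nhdsGE_iff_exists_Icc_subset.1 (nhdsWithin_le_nhds ?_)
    exact (hcont.continuousAt.eventually_lt continuousAt_const hxδ).and (Iic_mem_nhds hxb)
  have hmem : ∀ t ∈ Ico x c, t ∈ Icc a b := fun t ht => ⟨hxa.trans ht.1, (hc ⟨ht.1, ht.2.le⟩).2⟩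
  have hgron := dist_le_of_trajectories_ODE_of_mem (s := fun _ => U) (fun t _ => hv t)
    hf.continuous.continuousOn (fun t _ => (hf t).hasDerivWithinAt)
    (fun t ht => hU t (hmem t ht) (mem_closedBall.2 (hc ⟨ht.1, ht.2.le⟩).1.le))
    hg.continuous.continuousOn (fun t _ => (hg t).hasDerivWithinAt)
    (fun t ht => hU t (hmem t ht) (mem_closedBall_self (dist_nonneg.trans hxδ.le))) le_rfl
  refine mem_of_superset (Icc_mem_nhdsGT hxc) fun t ht => ?_
  calc dist (f t) (g t) ≤ dist (f x) (g x) * exp (K * (t - x)) := hgron t ht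
    _ ≤ ρ * exp (K * (x - a)) * exp (K * (t - x)) := by gcongr
    _ = ρ * exp (K * (t - a)) := by rw [mul_assoc, ← exp_add]; ring_nf

theorem ContDiff.exists_lipschitzOnWith_closedBall [ProperSpace E] {F : Type*}
    [NormedAddCommGroup F] [NormedSpace ℝ F] {f : E → F} (hf : ContDiff ℝ 1 f) (c : E) (R : ℝ) :
    ∃ L : ℝ≥0, (∀ x ∈ closedBall c R, ‖fderiv ℝ f x‖ ≤ L) ∧
      LipschitzOnWith L f (closedBall c R) := by
  obtain ⟨C, hC⟩ := (isCompact_closedBall c R).exists_bound_of_continuousOn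
    (hf.continuous_fderiv one_ne_zero).continuousOn
  have hL : ∀ x ∈ closedBall c R, ‖fderiv ℝ f x‖₊ ≤ C.toNNReal := fun x hx => by
    rw [← NNReal.coe_le_coe, Real.coe_toNNReal', coe_nnnorm]
    exact (hC x hx).trans (le_max_left _ _)
  exact ⟨C.toNNReal, hL, (convex_closedBall c R).lipschitzOnWith_of_nnnorm_fderiv_le
    (fun x _ => hf.differentiable one_ne_zero x) hL⟩

theorem ContDiff.exists_forall_norm_sub_sub_fderiv_le [ProperSpace E] {F : Type*}
    [NormedAddCommGroup F] [NormedSpace ℝ F] {f : E → F} (hf : ContDiff ℝ 1 f) {K : Set E}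
    (hK : IsCompact K) {ε : ℝ} (hε : 0 < ε) :
    ∃ δ > 0, ∀ x ∈ K, ∀ y ∈ closedBall x δ,
      ‖f y - f x - fderiv ℝ f x (y - x)‖ ≤ ε * ‖y - x‖ := by
  obtain ⟨δ₀, hδ₀, hδ⟩ := Metric.uniformContinuousOn_iff.1
    (hK.cthickening.uniformContinuousOn_of_continuous
      (hf.continuous_fderiv one_ne_zero).continuousOn) ε hε
  refine ⟨min (δ₀ / 2) 1, by positivity, fun x hx y hy => ?_⟩
  have hsub : closedBall x (min (δ₀ / 2) 1) ⊆ cthickening 1 K :=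
    (closedBall_subset_closedBall (min_le_right _ _)).trans (closedBall_subset_cthickening hx 1)
  have hx' : x ∈ closedBall x (min (δ₀ / 2) 1) := mem_closedBall_self (by positivity)
  refine (convex_closedBall x _).norm_image_sub_le_of_norm_fderiv_le'
    (fun z _ => (hf.differentiable one_ne_zero) z) (fun z hz => ?_) hx' hy
  rw [← dist_eq_norm]
  refine (hδ z (hsub hz) x (hsub hx') ?_).le
  exact (mem_closedBall.1 hz).trans_lt ((min_le_left _ _).trans_lt (by linarith))

theorem gronwallBound_zero_left (K ε x : ℝ) :
    gronwallBound 0 K ε x = ε * gronwallBound 0 K 1 x := by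
  simp only [gronwallBound]
  split_ifs <;> ring

theorem norm_sub_sub_le_gronwallBound {v : ℝ → E → E} {y z : ℝ → E}
    (hy : IsIntegralCurve y v) (hz : IsIntegralCurve z v) {A M : ℝ → E →L[ℝ] E} {a b L η : ℝ}
    (hab : a ≤ b) (hM : IsIntegralCurveOn M (fun t N => (A t).comp N) (Icc a b))
    (hMa : M a = .id ℝ E) (hA : ∀ t ∈ Icc a b, ‖A t‖ ≤ L)
    (hlin : ∀ t ∈ Icc a b, ‖v t (y t) - v t (z t) - A t (y t - z t)‖ ≤ η) :
    ‖y b - z b - M b (y a - z a)‖ ≤ gronwallBound 0 L η (b - a) := by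
  set w := y a - z a
  set r := fun t => y t - z t - M t w
  have hr : ∀ t ∈ Icc a b,
      HasDerivWithinAt r (v t (y t) - v t (z t) - A t (M t w)) (Icc a b) t := fun t ht => by
    have hMw := (ContinuousLinearMap.apply ℝ E w).hasFDerivAt.comp_hasDerivWithinAt t (hM t ht)
    exact ((hy t).sub (hz t)).hasDerivWithinAt.sub hMw
  refine norm_le_gronwallBound_of_norm_deriv_right_le (f := r)
    (fun t ht => (hr t ht).continuousWithinAt)
    (fun t ht => (hr t (Ico_subset_Icc_self ht)).mono_of_mem_nhdsWithin (Icc_mem_nhdsGE_of_mem ht))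
    (by simp [r, w, hMa]) (fun t ht => ?_) b ⟨hab, le_rfl⟩
  have ht' := Ico_subset_Icc_self ht
  have hsplit : v t (y t) - v t (z t) - A t (M t w) =
      A t (r t) + (v t (y t) - v t (z t) - A t (y t - z t)) := by
    simp only [r, map_sub]; abel
  rw [hsplit]
  refine (norm_add_le _ _).trans (add_le_add ?_ (hlin t ht'))
  exact ((A t).le_opNorm _).trans (mul_le_mul_of_nonneg_right (hA t ht') (norm_nonneg _))

theorem hasFDerivAt_flow [ProperSpace E] {X : E → E} (hX : ContDiff ℝ 1 X) {φ : ℝ → E → E}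
    (hφ0 : ∀ p, φ 0 p = p) (hφ : ∀ p, IsIntegralCurve (φ · p) (fun _ => X)) {p : E} {τ : ℝ}
    (hτ : 0 ≤ τ) {M : ℝ → E →L[ℝ] E} (hM0 : M 0 = .id ℝ E)
    (hM : IsIntegralCurveOn M (fun t N => (fderiv ℝ X (φ t p)).comp N) (Icc 0 τ)) :
    HasFDerivAt (φ τ) (M τ) p := by
  set γ := (φ · p)
  obtain ⟨R, hR⟩ := (isCompact_Icc (a := 0) (b := τ)).exists_bound_of_continuousOn
    (hφ p).continuous.continuousOn
  have hγR : ∀ t ∈ Icc 0 τ, γ t ∈ closedBall 0 R := fun t ht => mem_closedBall_zero_iff.2 (hR t ht)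
  have hball : ∀ t ∈ Icc 0 τ, closedBall (γ t) 1 ⊆ closedBall 0 (R + 1) := fun t ht =>
    closedBall_subset_closedBall' (by rw [dist_zero_right]; linarith [hR t ht])
  obtain ⟨L, hL, hlip⟩ := hX.exists_lipschitzOnWith_closedBall 0 (R + 1)
  have hA : ∀ t ∈ Icc 0 τ, ‖fderiv ℝ X (γ t)‖ ≤ L := fun t ht =>
    hL _ (hball t ht (mem_closedBall_self zero_le_one))
  rw [hasFDerivAt_iff_isLittleO_nhds_zero, Asymptotics.isLittleO_iff]
  intro c hc
  set G := gronwallBound 0 L 1 τ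
  have hG : 0 ≤ G := by
    have := gronwallBound_mono le_rfl zero_le_one L.2 hτ
    rwa [gronwallBound_x0] at this
  -- chosen so that the Grönwall bound `ε * ‖h‖ * exp (L * τ) * G` is at most `c * ‖h‖`
  set ε := c / (exp (L * τ) * G + 1)
  obtain ⟨δ, hδ, hlin⟩ := hX.exists_forall_norm_sub_sub_fderiv_le (isCompact_closedBall (0 : E) R)
    (show 0 < ε by positivity)
  have hev : ∀ᶠ h in 𝓝 (0 : E), ‖h‖ * exp (L * τ) < min 1 δ :=
    (by fun_prop : Continuous fun h : E => ‖h‖ * exp (L * τ)).continuousAt.eventually_lt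
      continuousAt_const (by simpa using hδ)
  filter_upwards [hev] with h hh
  have hclose : ∀ t ∈ Icc 0 τ, dist (φ t (p + h)) (γ t) ≤ ‖h‖ * exp (L * τ) := fun t ht => by
    have := (hφ (p + h)).dist_le_mul_exp (fun _ => hlip) (hφ p) hball
      (by simpa [γ, hφ0] using (hh.trans_le (min_le_left _ _))) t ht
    simp only [hφ0, dist_eq_norm, add_sub_cancel_left, sub_zero] at this
    rw [dist_eq_norm]
    exact this.trans (by gcongr; exact ht.2)
  have hrem := norm_sub_sub_le_gronwallBound (hφ (p + h)) (hφ p) hτ hM hM0 hA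
    (η := ε * (‖h‖ * exp (L * τ))) fun t ht => by
      have hyz := hclose t ht
      refine (hlin _ (hγR t ht) _ (hyz.trans (hh.le.trans (min_le_right _ _)))).trans ?_
      rw [← dist_eq_norm]
      gcongr
  simp only [hφ0, add_sub_cancel_left, sub_zero] at hrem
  refine hrem.trans ?_
  rw [gronwallBound_zero_left]
  calc ε * (‖h‖ * exp (L * τ)) * G = c * ‖h‖ * (exp (L * τ) * G / (exp (L * τ) * G + 1)) := by
        simp only [ε]; ring
    _ ≤ c * ‖h‖ * 1 := by
        gcongr
        exact div_le_one_of_le₀ (by linarith) (by positivity)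
    _ = c * ‖h‖ := mul_one _

end Flow

section Liouville

theorem HasDerivWithinAt.matrix_det {ι : Type*} [Fintype ι] [DecidableEq ι]
    {m : ℝ → ι → ι → ℝ} {m' : ι → ι → ℝ} {s : Set ℝ} {t : ℝ}
    (h : HasDerivWithinAt m m' s t) :
    HasDerivWithinAt (fun τ => Matrix.det (m τ)) (∑ i, (Matrix.updateRow (m t) i (m' i)).det)
      s t := by
  let det : ContinuousMultilinearMap ℝ (fun _ : ι => ι → ℝ) ℝ :=
    ⟨Matrix.detRowAlternating.toMultilinearMap, continuous_id.matrix_det⟩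
  have := (det.hasFDerivAt (m t)).comp_hasDerivWithinAt t h
  rw [ContinuousMultilinearMap.linearDeriv_apply] at this
  exact this

theorem Matrix.sum_det_updateRow_mul {ι : Type*} [Fintype ι] [DecidableEq ι]
    (a m : Matrix ι ι ℝ) : ∑ i, (m.updateRow i ((a * m) i)).det = a.trace * m.det := by
  have hrow : ∀ i, (a * m) i = ∑ k, a i k • m k := fun i => by
    ext j; simp [Matrix.mul_apply, Finset.sum_apply]
  simp_rw [hrow, Matrix.det_updateRow_sum, smul_eq_mul, Matrix.trace, Finset.sum_mul]
  rfl

variable {E : Type*} [NormedAddCommGroup E] [NormedSpace ℝ E] [FiniteDimensional ℝ E]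

theorem HasDerivWithinAt.linearMap_det {M : ℝ → E →L[ℝ] E} {A : E →L[ℝ] E} {s : Set ℝ} {t : ℝ}
    (h : HasDerivWithinAt M (A.comp (M t)) s t) :
    HasDerivWithinAt (fun τ => LinearMap.det (M τ : E →ₗ[ℝ] E))
      (LinearMap.trace ℝ E A * LinearMap.det (M t : E →ₗ[ℝ] E)) s t := by
  classical
  let b := Module.finBasis ℝ E
  let T : (E →L[ℝ] E) →L[ℝ] (Fin _ → Fin _ → ℝ) :=
    LinearMap.toContinuousLinearMap
      ((LinearMap.toMatrix b b).toLinearMap ∘ₗ ContinuousLinearMap.coeLM ℝ)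
  have hT := (T.hasFDerivAt.comp_hasDerivWithinAt t h).matrix_det
  have hcomp : T (A.comp (M t)) =
      ((LinearMap.toMatrix b b A * LinearMap.toMatrix b b (M t) : Matrix _ _ ℝ) :
        Fin _ → Fin _ → ℝ) :=
    LinearMap.toMatrix_comp b b b _ _
  simp only [← LinearMap.det_toMatrix b, LinearMap.trace_eq_matrix_trace ℝ b]
  refine hT.congr_deriv ?_
  rw [hcomp]
  exact Matrix.sum_det_updateRow_mul _ _

theorem det_eq_det_mul_exp_integral_trace {M A : ℝ → E →L[ℝ] E} (hA : Continuous A) {a b : ℝ}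
    (hab : a ≤ b) (hM : IsIntegralCurveOn M (fun t N => (A t).comp N) (Icc a b)) :
    LinearMap.det (M b : E →ₗ[ℝ] E) =
      LinearMap.det (M a : E →ₗ[ℝ] E) * exp (∫ s in a..b, LinearMap.trace ℝ E (A s)) := by
  set tr := fun s => LinearMap.trace ℝ E (A s)
  have htr : Continuous tr :=
    (LinearMap.trace ℝ E ∘ₗ ContinuousLinearMap.coeLM ℝ).continuous_of_finiteDimensional.comp hA
  set g := fun t => LinearMap.det (M t : E →ₗ[ℝ] E) * exp (-∫ s in a..t, tr s)
  have hg : ∀ t ∈ Icc a b, HasDerivWithinAt g 0 (Icc a b) t := fun t ht => by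
    have hI := (htr.integral_hasStrictDerivAt a t).hasDerivAt.hasDerivWithinAt (s := Icc a b)
    refine ((hM t ht).linearMap_det.mul hI.neg.exp).congr_deriv ?_
    simp only [Pi.neg_apply, tr]
    ring
  have hconst := constant_of_has_deriv_right_zero (HasDerivWithinAt.continuousOn hg)
    (fun t ht => (hg t (Ico_subset_Icc_self ht)).mono_of_mem_nhdsWithin (Icc_mem_nhdsGE_of_mem ht))
    b ⟨hab, le_rfl⟩
  simp only [g, intervalIntegral.integral_same, neg_zero, exp_zero, mul_one] at hconst
  rw [← hconst, mul_assoc, ← exp_add, neg_add_cancel, exp_zero, mul_one]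

end Liouville

/-- If a `C¹` vector field `X` on `ℝ^d` generates a flow that is periodic of
period one, then the average of the divergence of `X` along every orbit vanishes:
`∫₀¹ div X(φ_s(p)) ds = 0`. -/
theorem stmt_16 {d : ℕ}
    (X : (Fin d → ℝ) → Fin d → ℝ) (hX : ContDiff ℝ 1 X)
    (φ : ℝ → (Fin d → ℝ) → Fin d → ℝ)
    (hφ0 : ∀ p, φ 0 p = p)
    (hflow : ∀ t p, HasDerivAt (fun s => φ s p) (X (φ t p)) t)
    (hper : ∀ p, φ 1 p = p) :
    ∀ p, ∫ s in (0:ℝ)..1,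
      LinearMap.trace ℝ (Fin d → ℝ)
        ((fderiv ℝ X (φ s p) : (Fin d → ℝ) →L[ℝ] (Fin d → ℝ)) :
          (Fin d → ℝ) →ₗ[ℝ] (Fin d → ℝ)) = 0 := by
  intro p
  set A := fun s => fderiv ℝ X (φ s p)
  have hA : Continuous A := (hX.continuous_fderiv one_ne_zero).comp
    (continuous_iff_continuousAt.2 fun t => (hflow t p).continuousAt)
  obtain ⟨M, hM0, hM⟩ := exists_isIntegralCurveOn_clm
    ((ContinuousLinearMap.compL ℝ (Fin d → ℝ) (Fin d → ℝ) (Fin d → ℝ)).continuous.comp hA) 0 1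
    (ContinuousLinearMap.id ℝ (Fin d → ℝ))
  have hM1 : M 1 = ContinuousLinearMap.id ℝ (Fin d → ℝ) := by
    refine (hasFDerivAt_flow hX hφ0 (fun p t => hflow t p) zero_le_one hM0 hM).unique ?_
    rw [show φ 1 = id from funext hper]
    exact hasFDerivAt_id p
  have hdet := det_eq_det_mul_exp_integral_trace hA zero_le_one hM
  simp only [hM0, hM1, ContinuousLinearMap.coe_id, LinearMap.det_id, one_mul] at hdet
  exact Real.exp_eq_one_iff _ |>.1 hdet.symm
end
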